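/- arXiv:0907.5030 — 6 statements merged into one kernel-verified Lean document; each statement's English description precedes it below -/
import Mathlib

section
/- For any four subspaces W_1, W_2, W_3, W_4 of a finite-dimensional vector space over a field, the Ingleton inequality holds: dim⟨W_1,W_2⟩ + dim⟨W_1,W_3⟩ + dim⟨W_1,W_4⟩ + dim⟨W_2,W_3⟩ + dim⟨W_2,W_4⟩ ≥ dim W_1 + dim W_2 + dim⟨W_3,W_4⟩ + dim⟨W_1,W_2,W_3⟩ + dim⟨W_1,W_2,W_4⟩, where ⟨·⟩ denotes the span of the union of the listed subspaces. Consequently, every representable polymatroid is Ingletonian. -/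
open Module Filter Topology

/-- A representation of a rank function on ground set `X` by subspaces of a
finite-dimensional vector space `W` over a finite field `F`. -/
structure SubspaceRep {X : Type} (h : Finset X → ℝ) where
  F : Type
  W : Type
  [fieldF : Field F]
  [fintypeF : Fintype F]
  [addCommGroupW : AddCommGroup W]
  [moduleW : Module F W]
  [finiteDimensionalW : FiniteDimensional F W]
  V : X → Submodule F W
  rank_eq : ∀ A : Finset X, h A = (Module.finrank F ↥(A.sup V) : ℝ)

/-- `h` is representable: it is `q`-representable for some prime power `q`
(equivalently, it is given by subspace dimensions over some finite field). -/
def IsRepresentable {X : Type} (h : Finset X → ℝ) : Prop := Nonempty (SubspaceRep h)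

/-- `h` is even representable: `2^m`-representable for some positive integer `m`. -/
def EvenRepresentable {X : Type} (h : Finset X → ℝ) : Prop :=
  ∃ (r : SubspaceRep h) (m : ℕ), 0 < m ∧ Nat.card r.F = 2 ^ m

/-- `h` is odd representable: `p^m`-representable for some odd prime `p` and positive `m`. -/
def OddRepresentable {X : Type} (h : Finset X → ℝ) : Prop :=
  ∃ (r : SubspaceRep h) (p m : ℕ), p.Prime ∧ Odd p ∧ 0 < m ∧ Nat.card r.F = p ^ m

/-- Polymatroid axioms: normalization, nonnegativity, monotonicity, submodularity. -/
def IsPolymatroid {X : Type} [DecidableEq X] (h : Finset X → ℝ) : Prop :=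
  h ∅ = 0 ∧ (∀ A, 0 ≤ h A) ∧ (∀ A B : Finset X, A ⊆ B → h A ≤ h B) ∧
    ∀ A B : Finset X, h (A ∪ B) + h (A ∩ B) ≤ h A + h B

/-- The Ingleton expression `J_h(A1,A2,A3,A4)`. -/
noncomputable def ingletonJ {X : Type} [DecidableEq X] (h : Finset X → ℝ)
    (A1 A2 A3 A4 : Finset X) : ℝ :=
  h (A1 ∪ A2) + h (A1 ∪ A3) + h (A1 ∪ A4) + h (A2 ∪ A3) + h (A2 ∪ A4)
    - h A1 - h A2 - h (A3 ∪ A4) - h (A1 ∪ A2 ∪ A3) - h (A1 ∪ A2 ∪ A4)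

/-- `h` is Ingletonian if all Ingleton expressions are nonnegative. -/
def IsIngletonian {X : Type} [DecidableEq X] (h : Finset X → ℝ) : Prop :=
  ∀ A1 A2 A3 A4 : Finset X, 0 ≤ ingletonJ h A1 A2 A3 A4

/-- The convex cone generated by a set `S` of rank functions (viewed as points of
`ℝ^{2^|X|}`): all finite nonnegative combinations of elements of `S`. -/
def coneHull {X : Type} (S : Set (Finset X → ℝ)) : Set (Finset X → ℝ) :=
  {x | ∃ (m : ℕ) (c : Fin m → ℝ) (f : Fin m → Finset X → ℝ),
    (∀ i, 0 ≤ c i) ∧ (∀ i, f i ∈ S) ∧ x = ∑ i, c i • f i}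

/-- `h` is almost representable: a coordinatewise limit `h = lim_i c_i g_i` with
`c_i > 0` and each `g_i` representable. -/
def AlmostRepresentable {X : Type} (h : Finset X → ℝ) : Prop :=
  ∃ (g : ℕ → Finset X → ℝ) (c : ℕ → ℝ), (∀ i, IsRepresentable (g i)) ∧
    (∀ i, 0 < c i) ∧ ∀ A : Finset X, Tendsto (fun i => c i * g i A) atTop (𝓝 (h A))

/-- `h` is almost even representable. -/
def AlmostEvenRepresentable {X : Type} (h : Finset X → ℝ) : Prop :=
  ∃ (g : ℕ → Finset X → ℝ) (c : ℕ → ℝ), (∀ i, EvenRepresentable (g i)) ∧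
    (∀ i, 0 < c i) ∧ ∀ A : Finset X, Tendsto (fun i => c i * g i A) atTop (𝓝 (h A))

/-- `h` is almost odd representable. -/
def AlmostOddRepresentable {X : Type} (h : Finset X → ℝ) : Prop :=
  ∃ (g : ℕ → Finset X → ℝ) (c : ℕ → ℝ), (∀ i, OddRepresentable (g i)) ∧
    (∀ i, 0 < c i) ∧ ∀ A : Finset X, Tendsto (fun i => c i * g i A) atTop (𝓝 (h A))

/-- `h` is cc-representable: it lies in the closure of the convex cone generated by
the set `Υ[X]` of representable rank functions on `X`. -/
def CcRepresentable {X : Type} (h : Finset X → ℝ) : Prop :=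
  h ∈ closure (coneHull {g : Finset X → ℝ | IsRepresentable g})

/-- A matroid: an integer-valued polymatroid with `h(A) ≤ |A|`. -/
def IsIntMatroid {X : Type} [DecidableEq X] (h : Finset X → ℝ) : Prop :=
  IsPolymatroid h ∧ (∀ A : Finset X, ∃ z : ℤ, h A = (z : ℝ)) ∧ ∀ A : Finset X, h A ≤ A.card

/-- A circuit of a matroid: a minimal dependent set. -/
def IsCircuit {X : Type} (h : Finset X → ℝ) (C : Finset X) : Prop :=
  h C < C.card ∧ ∀ D : Finset X, D ⊂ C → h D = D.card

/-- A connected matroid: every pair of distinct elements lies in a common circuit. -/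
def IsConnectedMatroid {X : Type} [DecidableEq X] (h : Finset X → ℝ) : Prop :=
  IsIntMatroid h ∧ ∀ x y : X, x ≠ y → ∃ C : Finset X, IsCircuit h C ∧ x ∈ C ∧ y ∈ C

/-- the Ingleton inequality holds for any four subspaces of a
finite-dimensional vector space over a field; consequently, every representable
polymatroid is Ingletonian. -/
theorem ingleton_inequality_and_representable_ingletonian :
    (∀ (K V : Type) [Field K] [AddCommGroup V] [Module K V] [FiniteDimensional K V]
        (W1 W2 W3 W4 : Submodule K V),
      (finrank K ↥W1 : ℝ) + (finrank K ↥W2 : ℝ) + (finrank K ↥(W3 ⊔ W4) : ℝ)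
          + (finrank K ↥(W1 ⊔ W2 ⊔ W3) : ℝ) + (finrank K ↥(W1 ⊔ W2 ⊔ W4) : ℝ)
        ≤ (finrank K ↥(W1 ⊔ W2) : ℝ) + (finrank K ↥(W1 ⊔ W3) : ℝ)
          + (finrank K ↥(W1 ⊔ W4) : ℝ) + (finrank K ↥(W2 ⊔ W3) : ℝ)
          + (finrank K ↥(W2 ⊔ W4) : ℝ))
    ∧ (∀ (X : Type) [Fintype X] [DecidableEq X] (h : Finset X → ℝ),
        IsRepresentable h → IsIngletonian h) := by
  have key : ∀ (K V : Type) [Field K] [AddCommGroup V] [Module K V] [FiniteDimensional K V]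
      (W1 W2 W3 W4 : Submodule K V),
      (finrank K ↥W1 : ℝ) + (finrank K ↥W2 : ℝ) + (finrank K ↥(W3 ⊔ W4) : ℝ)
          + (finrank K ↥(W1 ⊔ W2 ⊔ W3) : ℝ) + (finrank K ↥(W1 ⊔ W2 ⊔ W4) : ℝ)
        ≤ (finrank K ↥(W1 ⊔ W2) : ℝ) + (finrank K ↥(W1 ⊔ W3) : ℝ)
          + (finrank K ↥(W1 ⊔ W4) : ℝ) + (finrank K ↥(W2 ⊔ W3) : ℝ)
          + (finrank K ↥(W2 ⊔ W4) : ℝ) := by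
    intro K V _ _ _ _ W1 W2 W3 W4
    set Z := W1 ⊓ W2 with hZ
    -- e12
    have e12 := Submodule.finrank_sup_add_finrank_inf_eq W1 W2
    -- (1): submodularity with W1⊔W3, W2⊔W3
    have e3 := Submodule.finrank_sup_add_finrank_inf_eq (W1 ⊔ W3) (W2 ⊔ W3)
    have e4 := Submodule.finrank_sup_add_finrank_inf_eq (W1 ⊔ W4) (W2 ⊔ W4)
    have eZ := Submodule.finrank_sup_add_finrank_inf_eq (Z ⊔ W3) (Z ⊔ W4)
    have hsup3 : (W1 ⊔ W3) ⊔ (W2 ⊔ W3) = W1 ⊔ W2 ⊔ W3 := by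
      rw [sup_assoc, sup_comm W3, sup_assoc, sup_idem, ← sup_assoc]
    have hsup4 : (W1 ⊔ W4) ⊔ (W2 ⊔ W4) = W1 ⊔ W2 ⊔ W4 := by
      rw [sup_assoc, sup_comm W4, sup_assoc, sup_idem, ← sup_assoc]
    have hinf3 : Z ⊔ W3 ≤ (W1 ⊔ W3) ⊓ (W2 ⊔ W3) := by
      refine sup_le (le_inf ?_ ?_) (le_inf le_sup_right le_sup_right)
      · exact le_trans inf_le_left le_sup_left
      · exact le_trans inf_le_right le_sup_left
    have hinf4 : Z ⊔ W4 ≤ (W1 ⊔ W4) ⊓ (W2 ⊔ W4) := by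
      refine sup_le (le_inf ?_ ?_) (le_inf le_sup_right le_sup_right)
      · exact le_trans inf_le_left le_sup_left
      · exact le_trans inf_le_right le_sup_left
    have hZle : Z ≤ (Z ⊔ W3) ⊓ (Z ⊔ W4) := le_inf le_sup_left le_sup_left
    have hW34 : W3 ⊔ W4 ≤ (Z ⊔ W3) ⊔ (Z ⊔ W4) :=
      sup_le (le_trans le_sup_right le_sup_left) (le_trans le_sup_right le_sup_right)
    have m3 := Submodule.finrank_mono (R := K) (M := V) hinf3
    have m4 := Submodule.finrank_mono (R := K) (M := V) hinf4
    have mZ := Submodule.finrank_mono (R := K) (M := V) hZle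
    have m34 := Submodule.finrank_mono (R := K) (M := V) hW34
    rw [hsup3] at e3
    rw [hsup4] at e4
    have c12 := congrArg (Nat.cast (R := ℝ)) e12
    have c3 := congrArg (Nat.cast (R := ℝ)) e3
    have c4 := congrArg (Nat.cast (R := ℝ)) e4
    have cZ := congrArg (Nat.cast (R := ℝ)) eZ
    push_cast at c12 c3 c4 cZ
    have c3' : (finrank K ↥((W1 ⊔ W3) ⊓ (W2 ⊔ W3)) : ℝ) ≥ (finrank K ↥(Z ⊔ W3) : ℝ) := by
      exact_mod_cast m3
    have c4' : (finrank K ↥((W1 ⊔ W4) ⊓ (W2 ⊔ W4)) : ℝ) ≥ (finrank K ↥(Z ⊔ W4) : ℝ) := by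
      exact_mod_cast m4
    have cZ' : (finrank K ↥((Z ⊔ W3) ⊓ (Z ⊔ W4)) : ℝ) ≥ (finrank K ↥Z : ℝ) := by
      exact_mod_cast mZ
    have c34' : (finrank K ↥((Z ⊔ W3) ⊔ (Z ⊔ W4)) : ℝ) ≥ (finrank K ↥(W3 ⊔ W4) : ℝ) := by
      exact_mod_cast m34
    linarith
  refine ⟨key, ?_⟩
  intro X _ _ h ⟨r⟩ A1 A2 A3 A4
  letI := r.fieldF
  letI := r.addCommGroupW
  letI := r.moduleW
  letI := r.finiteDimensionalW
  have hrank := r.rank_eq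
  unfold ingletonJ
  have hu : ∀ A B : Finset X, (A ∪ B).sup r.V = A.sup r.V ⊔ B.sup r.V := fun A B =>
    Finset.sup_union
  have := key r.F r.W (A1.sup r.V) (A2.sup r.V) (A3.sup r.V) (A4.sup r.V)
  simp only [hrank]
  rw [hu A1 A2, hu A1 A3, hu A1 A4, hu A2 A3, hu A2 A4, hu A3 A4,
    hu (A1 ∪ A2) A3, hu (A1 ∪ A2) A4, hu A1 A2]
  linarith
end

section
/- Let (Y, h) be an Ingletonian polymatroid and let 0 ≤ ε ≤ h(Y). Define g(A) := min(h(A), h(Y) − ε) for all A ⊆ Y. Then (Y, g) is also an Ingletonian polymatroid; in particular g is a polymatroid rank function and J_g(A_1,A_2,A_3,A_4) ≥ 0 for all subsets A_1,A_2,A_3,A_4 ⊆ Y. -/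
open Module Filter Topology

/-- ε-perturbation preserves the Ingletonian property: if `(Y, h)` is an
Ingletonian polymatroid and `0 ≤ ε ≤ h(Y)`, then `g(A) := min(h(A), h(Y) − ε)` is again
an Ingletonian polymatroid. -/
theorem epsilon_perturbation_ingletonian {Y : Type} [Fintype Y] [DecidableEq Y]
    (h : Finset Y → ℝ) (hpoly : IsPolymatroid h) (hing : IsIngletonian h)
    (ε : ℝ) (hε0 : 0 ≤ ε) (hε1 : ε ≤ h Finset.univ) :
    IsPolymatroid (fun A => min (h A) (h Finset.univ - ε)) ∧
    IsIngletonian (fun A => min (h A) (h Finset.univ - ε)) := by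
  obtain ⟨h0, hnn, hmono, hsub⟩ := hpoly
  set t : ℝ := h Finset.univ - ε with htdef
  have ht0 : (0 : ℝ) ≤ t := by simp only [htdef]; linarith
  have key : ∀ A B C D : Finset Y, C ⊆ A ∪ B → D ⊆ A ∩ B →
      h C + h D ≤ h A + h B := by
    intro A B C D hC hD
    have k1 := hsub A B
    have k2 := hmono C (A ∪ B) hC
    have k3 := hmono D (A ∩ B) hD
    linarith
  constructor
  · refine ⟨?_, ?_, ?_, ?_⟩
    · show min (h ∅) t = 0
      rw [h0]; exact min_eq_left ht0
    · intro A
      exact le_min (hnn A) ht0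
    · intro A B hAB
      exact min_le_min (hmono A B hAB) le_rfl
    · intro A B
      show min (h (A ∪ B)) t + min (h (A ∩ B)) t ≤ min (h A) t + min (h B) t
      have k1 := hsub A B
      have k2 := hmono (A ∩ B) A Finset.inter_subset_left
      have k3 := hmono (A ∩ B) B Finset.inter_subset_right
      have k4 := hmono A (A ∪ B) Finset.subset_union_left
      have k5 := hmono B (A ∪ B) Finset.subset_union_right
      rcases min_cases (h A) t with ⟨eA, lA⟩ | ⟨eA, lA⟩ <;>
      rcases min_cases (h B) t with ⟨eB, lB⟩ | ⟨eB, lB⟩ <;>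
      · have u1 := min_le_left (h (A ∪ B)) t
        have u2 := min_le_right (h (A ∪ B)) t
        have u3 := min_le_left (h (A ∩ B)) t
        have u4 := min_le_right (h (A ∩ B)) t
        linarith
  · intro A1 A2 A3 A4
    have hJ := hing A1 A2 A3 A4
    simp only [ingletonJ] at hJ ⊢
    -- submodularity-based facts
    have f2 : h (A1 ∪ A2 ∪ A3) + h A1 ≤ h (A1 ∪ A2) + h (A1 ∪ A3) := by
      refine key _ _ _ _ ?_ ?_ <;>
        · intro x hx; simp only [Finset.mem_union, Finset.mem_inter] at hx ⊢; tauto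
    have f3 : h (A1 ∪ A2 ∪ A4) + h A1 ≤ h (A1 ∪ A2) + h (A1 ∪ A4) := by
      refine key _ _ _ _ ?_ ?_ <;>
        · intro x hx; simp only [Finset.mem_union, Finset.mem_inter] at hx ⊢; tauto
    have f4 : h (A1 ∪ A2 ∪ A3) + h A2 ≤ h (A1 ∪ A2) + h (A2 ∪ A3) := by
      refine key _ _ _ _ ?_ ?_ <;>
        · intro x hx; simp only [Finset.mem_union, Finset.mem_inter] at hx ⊢; tauto
    have f5 : h (A1 ∪ A2 ∪ A4) + h A2 ≤ h (A1 ∪ A2) + h (A2 ∪ A4) := by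
      refine key _ _ _ _ ?_ ?_ <;>
        · intro x hx; simp only [Finset.mem_union, Finset.mem_inter] at hx ⊢; tauto
    have f6 : h (A1 ∪ A2 ∪ A3) + h A3 ≤ h (A1 ∪ A3) + h (A2 ∪ A3) := by
      refine key _ _ _ _ ?_ ?_ <;>
        · intro x hx; simp only [Finset.mem_union, Finset.mem_inter] at hx ⊢; tauto
    have f7 : h (A1 ∪ A2 ∪ A4) + h A4 ≤ h (A1 ∪ A4) + h (A2 ∪ A4) := by
      refine key _ _ _ _ ?_ ?_ <;>
        · intro x hx; simp only [Finset.mem_union, Finset.mem_inter] at hx ⊢; tauto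
    have f8 : h (A3 ∪ A4) + h A1 ≤ h (A1 ∪ A3) + h (A1 ∪ A4) := by
      refine key _ _ _ _ ?_ ?_ <;>
        · intro x hx; simp only [Finset.mem_union, Finset.mem_inter] at hx ⊢; tauto
    have f9 : h (A3 ∪ A4) + h A2 ≤ h (A2 ∪ A3) + h (A2 ∪ A4) := by
      refine key _ _ _ _ ?_ ?_ <;>
        · intro x hx; simp only [Finset.mem_union, Finset.mem_inter] at hx ⊢; tauto
    have f10 : h (A3 ∪ A4) + h ∅ ≤ h A3 + h A4 :=
      key A3 A4 (A3 ∪ A4) ∅ subset_rfl (Finset.empty_subset _)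
    -- monotonicity facts
    have sub : ∀ A B : Finset Y, A ⊆ B → h A ≤ h B := hmono
    have m1 : h A1 ≤ h (A1 ∪ A2) := sub _ _ Finset.subset_union_left
    have m2 : h A1 ≤ h (A1 ∪ A3) := sub _ _ Finset.subset_union_left
    have m3 : h A1 ≤ h (A1 ∪ A4) := sub _ _ Finset.subset_union_left
    have m4 : h A2 ≤ h (A1 ∪ A2) := sub _ _ Finset.subset_union_right
    have m5 : h A2 ≤ h (A2 ∪ A3) := sub _ _ Finset.subset_union_left
    have m6 : h A2 ≤ h (A2 ∪ A4) := sub _ _ Finset.subset_union_left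
    have m7 : h (A1 ∪ A2) ≤ h (A1 ∪ A2 ∪ A3) := sub _ _ Finset.subset_union_left
    have m8 : h (A1 ∪ A2) ≤ h (A1 ∪ A2 ∪ A4) := sub _ _ Finset.subset_union_left
    have m9 : h (A1 ∪ A3) ≤ h (A1 ∪ A2 ∪ A3) := sub _ _ (by
      intro x hx; simp only [Finset.mem_union] at hx ⊢; tauto)
    have m10 : h (A2 ∪ A3) ≤ h (A1 ∪ A2 ∪ A3) := sub _ _ (by
      intro x hx; simp only [Finset.mem_union] at hx ⊢; tauto)
    have m11 : h (A1 ∪ A4) ≤ h (A1 ∪ A2 ∪ A4) := sub _ _ (by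
      intro x hx; simp only [Finset.mem_union] at hx ⊢; tauto)
    have m12 : h (A2 ∪ A4) ≤ h (A1 ∪ A2 ∪ A4) := sub _ _ (by
      intro x hx; simp only [Finset.mem_union] at hx ⊢; tauto)
    have m13 : h A3 ≤ h (A1 ∪ A3) := sub _ _ Finset.subset_union_right
    have m14 : h A3 ≤ h (A2 ∪ A3) := sub _ _ Finset.subset_union_right
    have m15 : h A4 ≤ h (A1 ∪ A4) := sub _ _ Finset.subset_union_right
    have m16 : h A4 ≤ h (A2 ∪ A4) := sub _ _ Finset.subset_union_right
    have m17 : h A3 ≤ h (A3 ∪ A4) := sub _ _ Finset.subset_union_left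
    have m18 : h A4 ≤ h (A3 ∪ A4) := sub _ _ Finset.subset_union_right
    have n1 := hnn A1
    have n2 := hnn A2
    have n3 := hnn A3
    have n4 := hnn A4
    have n5 := hnn (A3 ∪ A4)
    rcases min_cases (h (A1 ∪ A2)) t with ⟨e12, l12⟩ | ⟨e12, l12⟩ <;>
    rcases min_cases (h (A1 ∪ A3)) t with ⟨e13, l13⟩ | ⟨e13, l13⟩ <;>
    rcases min_cases (h (A1 ∪ A4)) t with ⟨e14, l14⟩ | ⟨e14, l14⟩ <;>
    rcases min_cases (h (A2 ∪ A3)) t with ⟨e23, l23⟩ | ⟨e23, l23⟩ <;>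
    rcases min_cases (h (A2 ∪ A4)) t with ⟨e24, l24⟩ | ⟨e24, l24⟩ <;>
    · have u1 := min_le_left (h A1) t
      have u2 := min_le_right (h A1) t
      have u3 := min_le_left (h A2) t
      have u4 := min_le_right (h A2) t
      have u5 := min_le_left (h (A3 ∪ A4)) t
      have u6 := min_le_right (h (A3 ∪ A4)) t
      have u7 := min_le_left (h (A1 ∪ A2 ∪ A3)) t
      have u8 := min_le_right (h (A1 ∪ A2 ∪ A3)) t
      have u9 := min_le_left (h (A1 ∪ A2 ∪ A4)) t
      have u10 := min_le_right (h (A1 ∪ A2 ∪ A4)) t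
      linarith
end

section
/- Let (X, h) be a representable polymatroid and let 0 ≤ ε ≤ h(X). Then the ε-perturbation g_ε, defined by g_ε(A) := min(h(A), h(X) − ε), is almost representable. If moreover ε is a nonnegative integer, then g_ε is representable. -/
/-!
A representation `V : X → Submodule F W` can be realized over any extension field by base change,
and `n • h` is represented by the direct sum of `n` copies. Over a large enough field, quotienting
by a generic vector of the top space realizes the `1`-perturbation; iterating gives every integral
`ε`. For real `ε`, the representable functions `perturbation (n • h) ⌊n ε⌋` rescaled by `1 / n`
equal `perturbation h (⌊n ε⌋ / n)`, which converge to `perturbation h ε`.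
-/
open Module Filter Topology

open scoped TensorProduct

namespace Submodule

section Semiring

variable {ι R W₁ W₂ : Type*} [Semiring R] [AddCommMonoid W₁] [Module R W₁] [AddCommMonoid W₂]

theorem finset_sup_prod [Module R W₂] (V₁ : ι → Submodule R W₁) (V₂ : ι → Submodule R W₂)
    (A : Finset ι) :
    A.sup (fun i => (V₁ i).prod (V₂ i)) = (A.sup V₁).prod (A.sup V₂) := by
  classical
  induction A using Finset.induction_on with
  | empty => simp [prod_bot]
  | insert _ _ _ ih => simp [Finset.sup_insert, ih, prod_sup_prod]

theorem finset_sup_map {R₂ : Type*} [Semiring R₂] [Module R₂ W₂] {σ : R →+* R₂}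
    [RingHomSurjective σ] (f : W₁ →ₛₗ[σ] W₂) (V : ι → Submodule R W₁) (A : Finset ι) :
    A.sup (fun i => (V i).map f) = (A.sup V).map f :=
  (Finset.apply_sup_eq_sup_comp (map f) (map_sup · · f) (map_bot f)).symm

end Semiring

section BaseChange

variable {ι R A M : Type*} [CommSemiring R] [Semiring A] [Algebra R A] [AddCommMonoid M]
  [Module R M]

theorem baseChange_sup (p q : Submodule R M) :
    (p ⊔ q).baseChange A = p.baseChange A ⊔ q.baseChange A := by
  conv_lhs => rw [← span_eq p, ← span_eq q, ← span_union]
  rw [baseChange_span, Set.image_union, span_union, ← baseChange_span, ← baseChange_span,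
    span_eq, span_eq]

theorem finset_sup_baseChange (V : ι → Submodule R M) (s : Finset ι) :
    s.sup (fun i => (V i).baseChange A) = (s.sup V).baseChange A :=
  (Finset.apply_sup_eq_sup_comp (baseChange A) baseChange_sup (baseChange_bot A)).symm

end BaseChange

variable {K W : Type*} [Field K] [AddCommGroup W] [Module K W]

theorem finrank_prod {W₂ : Type*} [AddCommGroup W₂] [Module K W₂] (p : Submodule K W)
    (q : Submodule K W₂) [FiniteDimensional K p] [FiniteDimensional K q] :
    finrank K (p.prod q) = finrank K p + finrank K q := by
  have := LinearMap.finrank_range_of_inj (f := p.subtype.prodMap q.subtype)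
    (Prod.map_injective.mpr ⟨p.injective_subtype, q.injective_subtype⟩)
  rwa [LinearMap.range_prodMap, range_subtype, range_subtype, Module.finrank_prod] at this

theorem finrank_baseChange (L : Type*) [Field L] [Algebra K L] (p : Submodule K W)
    [FiniteDimensional K p] : finrank L (p.baseChange L) = finrank K p := by
  rw [baseChange, LinearMap.finrank_range_of_inj, Module.finrank_baseChange]
  exact Module.Flat.lTensor_preserves_injective_linearMap _ p.injective_subtype

theorem finrank_map_mkQ_add_finrank_inf (S U : Submodule K W) [FiniteDimensional K S] :
    finrank K (S.map U.mkQ) + finrank K ↥(S ⊓ U) = finrank K S := by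
  have := (U.mkQ.domRestrict S).finrank_range_add_finrank_ker
  rwa [LinearMap.range_domRestrict, LinearMap.ker_domRestrict, ker_mkQ,
    (equivMapOfInjective _ S.injective_subtype _).finrank_eq, map_comap_subtype] at this

theorem exists_mem_forall_notMem_of_card_lt {ι : Type*} (s : Finset ι) (T : Submodule K W)
    (p : ι → Submodule K W) (hp : ∀ i ∈ s, p i < T) (hs : s.card < ENat.card K) :
    ∃ v ∈ T, ∀ i ∈ s, v ∉ p i := by
  have hne : ∀ i : s, (p i).comap T.subtype ≠ ⊤ := fun i h =>
    (hp i i.2).not_ge (by rwa [comap_subtype_eq_top] at h)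
  obtain ⟨v, -, hv⟩ := Set.exists_of_ssubset
    (iUnion_ssubset_of_forall_ne_top_of_card_lt Finset.univ _ hne (by simpa using hs))
  exact ⟨v, v.2, fun i hi hvi => hv (Set.mem_iUnion₂.mpr ⟨⟨i, hi⟩, Finset.mem_univ _, hvi⟩)⟩

end Submodule

theorem FiniteField.exists_algebra_card_gt (K : Type) [Field K] [Finite K] (N : ℕ) :
    ∃ (L : Type) (_ : Field L) (_ : Fintype L) (_ : Algebra K L), N < Fintype.card L := by
  obtain ⟨s, hs⟩ := Infinite.exists_subset_card_eq (AlgebraicClosure K) (N + 1)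
  let L := IntermediateField.adjoin K (s : Set (AlgebraicClosure K))
  have : FiniteDimensional K L :=
    IntermediateField.finiteDimensional_adjoin fun x _ => Algebra.IsIntegral.isIntegral x
  have : Finite L := Module.finite_of_finite K
  let : Fintype L := Fintype.ofFinite L
  refine ⟨L, inferInstance, inferInstance, inferInstance, ?_⟩
  have := Fintype.card_le_of_injective
    (fun x : s => (⟨x, IntermediateField.subset_adjoin K _ x.2⟩ : L))
    (fun x y hxy => Subtype.ext (by simpa using hxy))
  rw [Fintype.card_coe, hs] at this
  omega

section Perturbation

variable {X : Type} [Fintype X]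

def perturbation (h : Finset X → ℝ) (ε : ℝ) : Finset X → ℝ :=
  fun A => min (h A) (h Finset.univ - ε)

theorem perturbation_zero {h : Finset X → ℝ} (hh : Monotone h) : perturbation h 0 = h :=
  funext fun A => by simpa [perturbation] using hh (Finset.subset_univ A)

theorem perturbation_apply_univ (h : Finset X → ℝ) {s : ℝ} (hs : 0 ≤ s) :
    perturbation h s Finset.univ = h Finset.univ - s :=
  min_eq_right (sub_le_self _ hs)

theorem perturbation_perturbation (h : Finset X → ℝ) {s t : ℝ} (hs : 0 ≤ s) (ht : 0 ≤ t) :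
    perturbation (perturbation h s) t = perturbation h (s + t) := by
  funext A
  rw [perturbation, perturbation_apply_univ h hs, perturbation, perturbation, min_assoc,
    min_eq_right (sub_le_self _ ht), sub_sub]

theorem perturbation_nsmul_apply (h : Finset X → ℝ) {n : ℕ} (hn : n ≠ 0) (t : ℝ)
    (A : Finset X) : perturbation (n • h) t A = n * perturbation h (t / n) A := by
  have hn' : (n : ℝ) ≠ 0 := Nat.cast_ne_zero.mpr hn
  simp only [perturbation, Pi.smul_apply, nsmul_eq_mul]
  rw [mul_min_of_nonneg _ _ (Nat.cast_nonneg n), mul_sub, mul_div_cancel₀ _ hn']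

theorem tendsto_perturbation_apply (h : Finset X → ℝ) {ι : Type*} {l : Filter ι} {t : ι → ℝ}
    {ε : ℝ} (ht : Tendsto t l (𝓝 ε)) (A : Finset X) :
    Tendsto (fun i => perturbation h (t i) A) l (𝓝 (perturbation h ε A)) :=
  tendsto_const_nhds.min (tendsto_const_nhds.sub ht)

end Perturbation

section Representation

attribute [local instance] SubspaceRep.fieldF SubspaceRep.fintypeF SubspaceRep.addCommGroupW
  SubspaceRep.moduleW SubspaceRep.finiteDimensionalW

variable {X : Type} {h : Finset X → ℝ}

namespace SubspaceRep

theorem monotone (r : SubspaceRep h) : Monotone h := fun A B hAB => by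
  rw [r.rank_eq, r.rank_eq]
  exact_mod_cast Submodule.finrank_mono (Finset.sup_mono hAB)

noncomputable def baseChange (r : SubspaceRep h) (L : Type) [Field L] [Fintype L]
    [Algebra r.F L] : SubspaceRep h where
  F := L
  W := L ⊗[r.F] r.W
  V i := (r.V i).baseChange L
  rank_eq A := by
    rw [Submodule.finset_sup_baseChange, Submodule.finrank_baseChange, r.rank_eq]

theorem exists_finrank_eq_nsmul (r : SubspaceRep h) (n : ℕ) :
    ∃ (W : Type) (_ : AddCommGroup W) (_ : Module r.F W) (_ : FiniteDimensional r.F W)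
      (V : X → Submodule r.F W), ∀ A, (n • h) A = finrank r.F ↥(A.sup V) := by
  induction n with
  | zero => exact ⟨r.W, inferInstance, inferInstance, inferInstance, fun _ => ⊥,
    fun A => by rw [Finset.sup_bot]; simp⟩
  | succ n ih =>
    obtain ⟨W, _, _, _, V, hV⟩ := ih
    refine ⟨W × r.W, inferInstance, inferInstance, inferInstance,
      fun i => (V i).prod (r.V i), fun A => ?_⟩
    rw [Submodule.finset_sup_prod, Submodule.finrank_prod, succ_nsmul, Pi.add_apply, hV,
      r.rank_eq]
    push_cast
    rfl

/-- A field with more elements than there are subsets of `X` has a vector `v` of the top space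
`T` lying in no proper `A.sup V < T`; quotienting by `v` lowers the rank by one exactly on the
sets `A` with `A.sup V = T`. -/
theorem isRepresentable_perturbation_one [Fintype X] (r : SubspaceRep h)
    (hcard : Fintype.card (Finset X) < Fintype.card r.F) (h1 : 1 ≤ h Finset.univ) :
    IsRepresentable (perturbation h 1) := by
  classical
  set T := Finset.univ.sup r.V
  obtain ⟨v, hvT, hv⟩ := Submodule.exists_mem_forall_notMem_of_card_lt
    (Finset.univ.filter fun A : Finset X => A.sup r.V < T) T (fun A => A.sup r.V)
    (fun A hA => (Finset.mem_filter.mp hA).2)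
    (by simpa using (Finset.card_filter_le _ _).trans_lt hcard)
  have hT : h Finset.univ = finrank r.F T := r.rank_eq _
  have hv0 : v ≠ 0 := by
    rintro rfl
    refine hv ∅ (Finset.mem_filter.mpr ⟨Finset.mem_univ _, ?_⟩) (zero_mem _)
    rw [Finset.sup_empty, bot_lt_iff_ne_bot]
    intro hbot
    rw [hbot, finrank_bot, Nat.cast_zero] at hT
    linarith
  refine ⟨⟨r.F, r.W ⧸ Submodule.span r.F {v}, fun i => (r.V i).map (Submodule.span r.F {v}).mkQ,
    fun A => ?_⟩⟩
  have hrank := Submodule.finrank_map_mkQ_add_finrank_inf (A.sup r.V) (Submodule.span r.F {v})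
  rw [Submodule.finset_sup_map, perturbation, r.rank_eq A, hT]
  rcases (Finset.sup_mono (Finset.subset_univ A) : A.sup r.V ≤ T).lt_or_eq with hlt | heq
  · have hvA := hv A (Finset.mem_filter.mpr ⟨Finset.mem_univ _, hlt⟩)
    rw [((Submodule.disjoint_span_singleton' hv0).mpr hvA).eq_bot, finrank_bot, add_zero]
      at hrank
    have := Submodule.finrank_lt_finrank_of_lt hlt
    rw [hrank, min_eq_left (le_sub_iff_add_le.mpr (by exact_mod_cast this))]
  · rw [heq, inf_eq_right.mpr ((Submodule.span_singleton_le_iff_mem _ _).mpr hvT),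
      finrank_span_singleton hv0] at hrank
    rw [heq, min_eq_right (by linarith), ← hrank]
    push_cast
    ring

end SubspaceRep

namespace IsRepresentable

theorem nsmul (hr : IsRepresentable h) (n : ℕ) : IsRepresentable (n • h) := by
  obtain ⟨r⟩ := hr
  obtain ⟨W, _, _, _, V, hV⟩ := r.exists_finrank_eq_nsmul n
  exact ⟨⟨r.F, W, V, hV⟩⟩

variable [Fintype X]

theorem perturbation_one (hr : IsRepresentable h) (h1 : 1 ≤ h Finset.univ) :
    IsRepresentable (perturbation h 1) := by
  obtain ⟨r⟩ := hr
  obtain ⟨L, _, _, _, hL⟩ := FiniteField.exists_algebra_card_gt r.F (Fintype.card (Finset X))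
  exact (r.baseChange L).isRepresentable_perturbation_one hL h1

theorem perturbation_natCast (hr : IsRepresentable h) (k : ℕ) (hk : k ≤ h Finset.univ) :
    IsRepresentable (perturbation h k) := by
  induction k with
  | zero =>
    obtain ⟨r⟩ := hr
    rw [Nat.cast_zero, perturbation_zero r.monotone]
    exact ⟨r⟩
  | succ k ih =>
    push_cast at hk ⊢
    rw [← perturbation_perturbation h k.cast_nonneg zero_le_one]
    refine (ih (by linarith)).perturbation_one ?_
    rw [perturbation_apply_univ h k.cast_nonneg]
    linarith

theorem almostRepresentable_perturbation (hr : IsRepresentable h) {ε : ℝ} (hε0 : 0 ≤ ε)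
    (hε1 : ε ≤ h Finset.univ) : AlmostRepresentable (perturbation h ε) := by
  refine ⟨fun i => perturbation ((i + 1) • h) ⌊ε * (i + 1 : ℕ)⌋₊, fun i => ((i + 1 : ℕ) : ℝ)⁻¹,
    fun i => (hr.nsmul _).perturbation_natCast _ ?_, fun i => by positivity, fun A => ?_⟩
  · rw [Pi.smul_apply, nsmul_eq_mul, mul_comm _ (h _)]
    exact (Nat.floor_le (by positivity)).trans (mul_le_mul_of_nonneg_right hε1 (by positivity))
  · have hn (i : ℕ) : ((i + 1 : ℕ) : ℝ) ≠ 0 := Nat.cast_ne_zero.mpr i.succ_ne_zero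
    simp_rw [perturbation_nsmul_apply h (Nat.add_one_ne_zero _), inv_mul_cancel_left₀ (hn _)]
    exact tendsto_perturbation_apply h ((tendsto_nat_floor_mul_div_atTop hε0).comp
      (tendsto_natCast_atTop_atTop.comp (tendsto_add_atTop_nat 1))) A

end IsRepresentable

end Representation

theorem perturbation_of_representable_general {X : Type} [Fintype X]
    (h : Finset X → ℝ) (hrep : IsRepresentable h)
    (ε : ℝ) (hε0 : 0 ≤ ε) (hε1 : ε ≤ h Finset.univ) :
    AlmostRepresentable (fun A => min (h A) (h Finset.univ - ε)) ∧
    ((∃ k : ℕ, ε = (k : ℝ)) →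
      IsRepresentable (fun A => min (h A) (h Finset.univ - ε))) := by
  refine ⟨hrep.almostRepresentable_perturbation hε0 hε1, ?_⟩
  rintro ⟨k, rfl⟩
  exact hrep.perturbation_natCast k hε1

/-- the ε-perturbation `g_ε(A) := min(h(A), h(X) − ε)` of a representable
polymatroid `(X, h)` with `0 ≤ ε ≤ h(X)` is almost representable, and it is
representable whenever `ε` is a nonnegative integer. -/
theorem perturbation_of_representable {X : Type} [Fintype X] [DecidableEq X]
    (h : Finset X → ℝ) (hpoly : IsPolymatroid h) (hrep : IsRepresentable h)
    (ε : ℝ) (hε0 : 0 ≤ ε) (hε1 : ε ≤ h Finset.univ) :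
    AlmostRepresentable (fun A => min (h A) (h Finset.univ - ε)) ∧
    ((∃ k : ℕ, ε = (k : ℝ)) →
      IsRepresentable (fun A => min (h A) (h Finset.univ - ε))) :=
  perturbation_of_representable_general h hrep ε hε0 hε1
end

section
/- Let M = (X, h) be a connected matroid and let (X, g) be any polymatroid that satisfies every equality in I(M), the set of equalities of the form H(A|B) = 0 or I(A;B) = 0 (A, B ⊆ X) that hold for h. Then g(X_i) takes the same value for every element X_i ∈ X, and g = c·h for some real c ≥ 0. -/
open Module Filter Topology

section Aux
variable {X : Type} [DecidableEq X] {h : Finset X → ℝ}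

lemma mat_insert_le (hm : IsIntMatroid h) (A : Finset X) (x : X) :
    h (insert x A) ≤ h A + 1 := by
  have hsub := hm.1.2.2.2 A {x}
  have h1 : h {x} ≤ 1 := by simpa using hm.2.2 {x}
  have h0 : 0 ≤ h (A ∩ {x}) := hm.1.2.1 _
  have he : insert x A = A ∪ {x} := by ext; simp [or_comm]
  rw [he]; linarith

lemma mat_union_le_card (hm : IsIntMatroid h) (B T : Finset X) :
    h (B ∪ T) ≤ h B + T.card := by
  induction T using Finset.induction_on with
  | empty => simp
  | @insert x T hx ih =>
    rw [Finset.union_insert, Finset.card_insert_of_notMem hx]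
    have := mat_insert_le hm (B ∪ T) x
    push_cast
    linarith

lemma mat_subset_indep (hm : IsIntMatroid h) {B S : Finset X} (hBS : B ⊆ S)
    (hS : h S = S.card) : h B = B.card := by
  have h1 : h (B ∪ (S \ B)) ≤ h B + (S \ B).card := mat_union_le_card hm B _
  rw [Finset.union_sdiff_of_subset hBS, hS, Finset.card_sdiff_of_subset hBS] at h1
  have h2 : ((S.card - B.card : ℕ) : ℝ) = (S.card : ℝ) - B.card := by
    exact_mod_cast Nat.cast_sub (Finset.card_le_card hBS)
  have := hm.2.2 B
  rw [h2] at h1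
  linarith

lemma mat_exists_basis (hm : IsIntMatroid h) (A : Finset X) :
    ∃ B : Finset X, B ⊆ A ∧ h B = B.card ∧ h B = h A := by
  classical
  set s := A.powerset.filter (fun B => h B = B.card) with hs
  have hne : s.Nonempty := ⟨∅, by simp [hs, hm.1.1]⟩
  obtain ⟨B, hBs, hBmax⟩ := s.exists_max_image (fun B => B.card) hne
  have hBA : B ⊆ A := by simpa [hs] using (Finset.mem_filter.1 hBs).1
  have hBI : h B = B.card := by simpa [hs] using (Finset.mem_filter.1 hBs).2
  refine ⟨B, hBA, hBI, ?_⟩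
  -- for each x ∈ A, h (insert x B) = h B
  have hstep : ∀ x ∈ A, h (insert x B) = h B := by
    intro x hx
    by_cases hxB : x ∈ B
    · rw [Finset.insert_eq_self.2 hxB]
    obtain ⟨z1, hz1⟩ := hm.2.1 B
    obtain ⟨z2, hz2⟩ := hm.2.1 (insert x B)
    have hmono : h B ≤ h (insert x B) := hm.1.2.2.1 _ _ (Finset.subset_insert _ _)
    have hle : h (insert x B) ≤ h B + 1 := mat_insert_le hm B x
    have hz12 : z1 ≤ z2 ∧ z2 ≤ z1 + 1 := by
      constructor <;> [exact_mod_cast hz1 ▸ hz2 ▸ hmono; exact_mod_cast hz1 ▸ hz2 ▸ hle]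
    have : z2 = z1 ∨ z2 = z1 + 1 := by omega
    rcases this with hcase | hcase
    · rw [hz1, hz2, hcase]
    · exfalso
      have hins : h (insert x B) = (insert x B).card := by
        rw [Finset.card_insert_of_notMem hxB, hz2, hcase]
        push_cast
        rw [← hz1, hBI]
      have hmem : insert x B ∈ s := by
        simp only [hs, Finset.mem_filter, Finset.mem_powerset]
        exact ⟨Finset.insert_subset hx hBA, hins⟩
      have := hBmax _ hmem
      rw [Finset.card_insert_of_notMem hxB] at this
      omega
  -- h (B ∪ S) = h B for all S ⊆ A
  have hspan : ∀ S : Finset X, S ⊆ A → h (B ∪ S) = h B := by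
    intro S
    induction S using Finset.induction_on with
    | empty => simp
    | @insert x S hx ih =>
      intro hSA
      have hxA : x ∈ A := hSA (Finset.mem_insert_self x S)
      have hSA' : S ⊆ A := (Finset.subset_insert x S).trans hSA
      have ihS := ih hSA'
      have he : B ∪ insert x S = (B ∪ S) ∪ insert x B := by ext; simp; tauto
      have hsub := hm.1.2.2.2 (B ∪ S) (insert x B)
      have hint : h B ≤ h ((B ∪ S) ∩ insert x B) :=
        hm.1.2.2.1 _ _ (Finset.subset_inter Finset.subset_union_left
          (Finset.subset_insert _ _))
      have hmono : h (B ∪ S) ≤ h (B ∪ insert x S) :=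
        hm.1.2.2.1 _ _ (Finset.union_subset_union_right (Finset.subset_insert _ _))
      rw [he] at hmono ⊢
      have := hstep x hxA
      linarith
  have := hspan A (le_refl A)
  rw [Finset.union_eq_right.2 hBA] at this
  exact this.symm

end Aux

/-- if `M = (X, h)` is a connected matroid and `(X, g)` is a polymatroid
satisfying every equality of the form `H(A|B) = 0` or `I(A;B) = 0` satisfied by `h`
(here `H(A|B) = h(A∪B) − h(B)` and `I(A;B) = h(A) + h(B) − h(A∪B)`), then `g` is
constant on singletons and `g = c·h` for some `c ≥ 0`. -/
theorem connected_matroid_determines_polymatroid {X : Type} [Fintype X] [DecidableEq X]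
    (h g : Finset X → ℝ) (hM : IsConnectedMatroid h) (hg : IsPolymatroid g)
    (hH : ∀ A B : Finset X, h (A ∪ B) - h B = 0 → g (A ∪ B) - g B = 0)
    (hI : ∀ A B : Finset X, h A + h B - h (A ∪ B) = 0 → g A + g B - g (A ∪ B) = 0) :
    (∀ x y : X, g {x} = g {y}) ∧ ∃ c : ℝ, 0 ≤ c ∧ ∀ A : Finset X, g A = c * h A := by
  obtain ⟨hm, hconn⟩ := hM
  obtain ⟨hg0, hgnn, hgmono, hgsub⟩ := hg
  -- g is additive on h-independent sets
  have indep_sum : ∀ B : Finset X, h B = B.card → g B = ∑ x ∈ B, g {x} := by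
    intro B
    induction B using Finset.induction_on with
    | empty => intro _; simp [hg0]
    | @insert x B hx ih =>
      intro hind
      have hB : h B = B.card := mat_subset_indep hm (Finset.subset_insert x B) hind
      have hxr : h {x} = 1 := by
        have := mat_subset_indep hm
          (Finset.singleton_subset_iff.2 (Finset.mem_insert_self x B)) hind
        simpa using this
      have hIeq : h {x} + h B - h ({x} ∪ B) = 0 := by
        rw [← Finset.insert_eq, hind, hxr, hB, Finset.card_insert_of_notMem hx]
        push_cast; ring
      have hgi := hI {x} B hIeq
      rw [← Finset.insert_eq] at hgi
      rw [Finset.sum_insert hx, ← ih hB]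
      linarith
  -- the value of g on any set is the sum of singleton values over a basis
  have gbasis : ∀ A : Finset X, ∃ B : Finset X,
      B ⊆ A ∧ h B = B.card ∧ h B = h A ∧ g A = ∑ x ∈ B, g {x} := by
    intro A
    obtain ⟨B, hBA, hBI, hBr⟩ := mat_exists_basis hm A
    have hHeq : h (A ∪ B) - h B = 0 := by
      rw [Finset.union_eq_left.2 hBA, hBr]; ring
    have hgH := hH A B hHeq
    rw [Finset.union_eq_left.2 hBA, sub_eq_zero] at hgH
    exact ⟨B, hBA, hBI, hBr, by rw [hgH]; exact indep_sum B hBI⟩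
  -- g takes the same value on any two distinct singletons
  have pair : ∀ x y : X, x ≠ y → g {x} = g {y} := by
    intro x y hxy
    obtain ⟨C, ⟨hClt, hCsub⟩, hxC, hyC⟩ := hconn x y hxy
    have hCx : h (C.erase x) = (C.erase x).card := hCsub _ (Finset.erase_ssubset hxC)
    have hCy : h (C.erase y) = (C.erase y).card := hCsub _ (Finset.erase_ssubset hyC)
    have hcpos : 1 ≤ C.card := Finset.card_pos.2 ⟨x, hxC⟩
    have hcardx : ((C.erase x).card : ℝ) = (C.card : ℝ) - 1 := by
      rw [Finset.card_erase_of_mem hxC, Nat.cast_sub hcpos, Nat.cast_one]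
    have hcardy : ((C.erase y).card : ℝ) = (C.card : ℝ) - 1 := by
      rw [Finset.card_erase_of_mem hyC, Nat.cast_sub (Finset.card_pos.2 ⟨y, hyC⟩), Nat.cast_one]
    have hC : h C = (C.card : ℝ) - 1 := by
      obtain ⟨z, hz⟩ := hm.2.1 C
      have h1 : h (C.erase x) ≤ h C := hm.1.2.2.1 _ _ (Finset.erase_subset _ _)
      rw [hCx, hcardx, hz] at h1
      rw [hz] at hClt ⊢
      have hz1 : (C.card : ℤ) - 1 ≤ z := by exact_mod_cast h1
      have hz2 : z < (C.card : ℤ) := by exact_mod_cast hClt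
      have : z = (C.card : ℤ) - 1 := by omega
      rw [this]; push_cast; ring
    have hgx : g C = g (C.erase x) := by
      have hhe : h ({x} ∪ C.erase x) - h (C.erase x) = 0 := by
        rw [← Finset.insert_eq, Finset.insert_erase hxC, hC, hCx, hcardx]; ring
      have := hH {x} (C.erase x) hhe
      rw [← Finset.insert_eq, Finset.insert_erase hxC, sub_eq_zero] at this
      exact this
    have hgy : g C = g (C.erase y) := by
      have hhe : h ({y} ∪ C.erase y) - h (C.erase y) = 0 := by
        rw [← Finset.insert_eq, Finset.insert_erase hyC, hC, hCy, hcardy]; ring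
      have := hH {y} (C.erase y) hhe
      rw [← Finset.insert_eq, Finset.insert_erase hyC, sub_eq_zero] at this
      exact this
    have hsx : g (C.erase x) = ∑ z ∈ C.erase x, g {z} := indep_sum _ hCx
    have hsy : g (C.erase y) = ∑ z ∈ C.erase y, g {z} := indep_sum _ hCy
    have htx : g {x} + ∑ z ∈ C.erase x, g {z} = ∑ z ∈ C, g {z} :=
      Finset.add_sum_erase C (fun z => g {z}) hxC
    have hty : g {y} + ∑ z ∈ C.erase y, g {z} = ∑ z ∈ C, g {z} :=
      Finset.add_sum_erase C (fun z => g {z}) hyC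
    linarith
  refine ⟨fun x y => ?_, ?_⟩
  · rcases eq_or_ne x y with rfl | hxy
    · rfl
    · exact pair x y hxy
  · by_cases hex : ∃ x0 : X, h {x0} = 1
    · obtain ⟨x0, hx0⟩ := hex
      refine ⟨g {x0}, hgnn _, fun A => ?_⟩
      obtain ⟨B, hBA, hBI, hBr, hgA⟩ := gbasis A
      have hsum : ∑ x ∈ B, g {x} = B.card * g {x0} := by
        rw [Finset.sum_congr rfl (fun x _ => ?_), Finset.sum_const, nsmul_eq_mul]
        rcases eq_or_ne x x0 with rfl | hne
        · rfl
        · exact pair x x0 hne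
      rw [hgA, hsum, ← hBI, hBr]; ring
    · push_neg at hex
      refine ⟨0, le_refl 0, fun A => ?_⟩
      obtain ⟨B, hBA, hBI, hBr, hgA⟩ := gbasis A
      have hBe : B = ∅ := by
        by_contra hne
        obtain ⟨x, hxB⟩ := Finset.nonempty_of_ne_empty hne
        have := mat_subset_indep hm (Finset.singleton_subset_iff.2 hxB) hBI
        simp at this
        exact hex x this
      rw [hgA, hBe]
      simp
end

section
/- Let (X_1, Φ_1) be a connected matroid that is even representable but not almost odd representable, and let (X_2, Φ_2) be a connected matroid that is odd representable but not almost even representable, with X_1 and X_2 disjoint. Let (X, Φ) be their direct sum: X = X_1 ∪ X_2 and Φ(A) = Φ_1(A ∩ X_1) + Φ_2(A ∩ X_2) for all A ⊆ X. Suppose 0 < ε ≤ min(Φ_1(X_1), Φ_2(X_2)), and let Φ^ε be the ε-perturbation of Φ, i.e., Φ^ε(A) := min(Φ(A), Φ(X) − ε). Then Φ^ε is not cc-representable, i.e., Φ^ε does not lie in the closure of the convex cone generated by the set Υ[X] of representable rank functions on X. -/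
open Module Filter Topology

/-!
A cc-representable rank function is, in the limit, a sum `e + o` with `e` in the closed cone of
even representable and `o` in the closed cone of odd representable rank functions. A connected
matroid spans an extreme ray of the cone of polymatroids, so the restriction of `o` to `X₁` is a
multiple of `Φ₁`. A positive multiple would put `Φ₁` in the closed cone of odd representable rank
functions; by Carathéodory and compactness, an extreme ray of such a closed cone is a limit of
positive multiples of single generators, so `Φ₁` would be almost odd representable. Hence `o`
vanishes on `X₁`, symmetrically `e` vanishes on `X₂`, and then monotonicity gives
`e(X) + o(X) ≥ Φ₁(X₁) + Φ₂(X₂) > Φ^ε(X)`.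
-/

open scoped Pointwise

section Polymatroid
variable {Y : Type} [DecidableEq Y]

lemma IsPolymatroid.smul {h : Finset Y → ℝ} {c : ℝ} (hh : IsPolymatroid h) (hc : 0 ≤ c) :
    IsPolymatroid (c • h) := by
  obtain ⟨h0, hnn, hmono, hsub⟩ := hh
  refine ⟨by simp [h0], fun A => mul_nonneg hc (hnn A),
    fun A B hAB => mul_le_mul_of_nonneg_left (hmono A B hAB) hc, fun A B => ?_⟩
  simp only [Pi.smul_apply, smul_eq_mul, ← mul_add]
  exact mul_le_mul_of_nonneg_left (hsub A B) hc

lemma IsPolymatroid.add {h g : Finset Y → ℝ} (hh : IsPolymatroid h) (hg : IsPolymatroid g) :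
    IsPolymatroid (h + g) := by
  obtain ⟨h0, hnn, hmono, hsub⟩ := hh
  obtain ⟨g0, gnn, gmono, gsub⟩ := hg
  refine ⟨by simp [h0, g0], fun A => add_nonneg (hnn A) (gnn A),
    fun A B hAB => add_le_add (hmono A B hAB) (gmono A B hAB), fun A B => ?_⟩
  simp only [Pi.add_apply]
  linarith [hsub A B, gsub A B]

lemma IsPolymatroid.comp_map {X : Type} [DecidableEq X] {h : Finset Y → ℝ}
    (hh : IsPolymatroid h) (e : X ↪ Y) : IsPolymatroid (h ∘ Finset.map e) := by
  obtain ⟨h0, hnn, hmono, hsub⟩ := hh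
  refine ⟨by simpa using h0, fun A => hnn _,
    fun A B hAB => hmono _ _ (Finset.map_subset_map.2 hAB), fun A B => ?_⟩
  simpa only [Function.comp_apply, Finset.map_union, Finset.map_inter] using
    hsub (A.map e) (B.map e)

lemma isClosed_setOf_isPolymatroid : IsClosed {h : Finset Y → ℝ | IsPolymatroid h} := by
  simp only [IsPolymatroid, Set.ofPred_and, Set.ofPred_forall]
  repeat' first | apply IsClosed.inter | apply isClosed_iInter; intro
  all_goals first
    | exact isClosed_eq (by fun_prop) (by fun_prop)
    | exact isClosed_le (by fun_prop) (by fun_prop)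

lemma IsPolymatroid.of_mem_coneHull {S : Set (Finset Y → ℝ)} (hS : ∀ g ∈ S, IsPolymatroid g)
    {h : Finset Y → ℝ} (hh : h ∈ coneHull S) : IsPolymatroid h := by
  obtain ⟨m, c, f, hc, hf, rfl⟩ := hh
  refine Finset.sum_induction _ IsPolymatroid (fun _ _ => IsPolymatroid.add) ?_
    fun i _ => (hS _ (hf i)).smul (hc i)
  exact ⟨rfl, fun _ => le_rfl, fun _ _ _ => le_rfl, fun _ _ => by simp⟩

lemma IsPolymatroid.of_mem_closure_coneHull {S : Set (Finset Y → ℝ)}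
    (hS : ∀ g ∈ S, IsPolymatroid g) {h : Finset Y → ℝ} (hh : h ∈ closure (coneHull S)) :
    IsPolymatroid h :=
  closure_minimal (fun _ => IsPolymatroid.of_mem_coneHull hS) isClosed_setOf_isPolymatroid hh

lemma IsPolymatroid.eq_zero_of_apply_univ_eq_zero [Fintype Y] {h : Finset Y → ℝ}
    (hh : IsPolymatroid h) (h0 : h Finset.univ = 0) : h = 0 :=
  funext fun A => le_antisymm (h0 ▸ hh.2.2.1 A _ (Finset.subset_univ A) :) (hh.2.1 A)

lemma IsPolymatroid.apply_union_le_add {h : Finset Y → ℝ} (hh : IsPolymatroid h)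
    (A B : Finset Y) : h (A ∪ B) ≤ h A + h B := by
  linarith [hh.2.2.2 A B, hh.2.1 (A ∩ B)]

lemma IsPolymatroid.apply_union_le_add_sum {h : Finset Y → ℝ} (hh : IsPolymatroid h)
    (A s : Finset Y) : h (A ∪ s) ≤ h A + ∑ x ∈ s, h {x} := by
  induction s using Finset.induction_on with
  | empty => simp
  | insert x s hx ih =>
    rw [Finset.sum_insert hx, Finset.insert_eq, Finset.union_comm {x}, ← Finset.union_assoc]
    linarith [hh.apply_union_le_add (A ∪ s) {x}]

lemma IsPolymatroid.apply_erase_eq {h : Finset Y → ℝ} (hh : IsPolymatroid h)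
    {A C : Finset Y} {x : Y} (hCA : C ⊆ A) (hx : x ∈ C) (hC : h (C.erase x) = h C) :
    h (A.erase x) = h A := by
  have hunion : A.erase x ∪ C = A := by
    ext y; by_cases hy : y = x <;> aesop
  have hinter : A.erase x ∩ C = C.erase x := by
    ext y; aesop
  have := hh.2.2.2 (A.erase x) C
  rw [hunion, hinter, hC] at this
  linarith [hh.2.2.1 _ _ (Finset.erase_subset x A)]

lemma IsPolymatroid.apply_eq_of_add_eq {g g' r : Finset Y → ℝ} (hg : IsPolymatroid g)
    (hg' : IsPolymatroid g') (hsum : g + g' = r) {A B : Finset Y} (hAB : A ⊆ B)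
    (hr : r A = r B) : g A = g B := by
  have hA := congrFun hsum A
  have hB := congrFun hsum B
  simp only [Pi.add_apply] at hA hB
  linarith [hg.2.2.1 A B hAB, hg'.2.2.1 A B hAB]

end Polymatroid

section Cone
variable {X Y : Type}

lemma coneHull_mono {S T : Set (Finset Y → ℝ)} (hST : S ⊆ T) : coneHull S ⊆ coneHull T := by
  rintro _ ⟨m, a, f, ha, hf, rfl⟩
  exact ⟨m, a, f, ha, fun i => hST (hf i), rfl⟩

lemma smul_mem_coneHull {S : Set (Finset Y → ℝ)} {x : Finset Y → ℝ} {c : ℝ} (hc : 0 ≤ c)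
    (hx : x ∈ coneHull S) : c • x ∈ coneHull S := by
  obtain ⟨m, a, f, ha, hf, rfl⟩ := hx
  exact ⟨m, fun i => c * a i, f, fun i => mul_nonneg hc (ha i), hf, by
    simp only [Finset.smul_sum, smul_smul]⟩

lemma comp_mem_coneHull {S : Set (Finset Y → ℝ)} {S' : Set (Finset X → ℝ)}
    {φ : Finset X → Finset Y} (hSS' : ∀ g ∈ S, g ∘ φ ∈ S') {x : Finset Y → ℝ}
    (hx : x ∈ coneHull S) : x ∘ φ ∈ coneHull S' := by
  obtain ⟨m, a, f, ha, hf, rfl⟩ := hx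
  refine ⟨m, a, fun i => f i ∘ φ, ha, fun i => hSS' _ (hf i), ?_⟩
  funext A
  simp [Finset.sum_apply]

lemma smul_mem_closure_coneHull {S : Set (Finset Y → ℝ)} {x : Finset Y → ℝ} {c : ℝ}
    (hc : 0 ≤ c) (hx : x ∈ closure (coneHull S)) : c • x ∈ closure (coneHull S) :=
  map_mem_closure (continuous_const_smul c) hx fun _ => smul_mem_coneHull hc

lemma comp_mem_closure_coneHull {S : Set (Finset Y → ℝ)} {S' : Set (Finset X → ℝ)}
    {φ : Finset X → Finset Y} (hSS' : ∀ g ∈ S, g ∘ φ ∈ S') {x : Finset Y → ℝ}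
    (hx : x ∈ closure (coneHull S)) : x ∘ φ ∈ closure (coneHull S') :=
  map_mem_closure (f := (· ∘ φ)) (continuous_pi fun A => continuous_apply (φ A)) hx
    fun _ => comp_mem_coneHull hSS'

lemma coneHull_union_subset_add {S T : Set (Finset Y → ℝ)} (hS : 0 ∈ S) (hT : 0 ∈ T) :
    coneHull (S ∪ T) ⊆ coneHull S + coneHull T := by
  classical
  rintro _ ⟨m, a, f, ha, hf, rfl⟩
  refine ⟨∑ i, a i • if f i ∈ S then f i else 0, ⟨m, a, _, ha, fun i => ?_, rfl⟩,
    ∑ i, a i • if f i ∈ S then 0 else f i, ⟨m, a, _, ha, fun i => ?_, rfl⟩, ?_⟩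
  · split_ifs with h
    exacts [h, hS]
  · split_ifs with h
    exacts [hT, (hf i).resolve_left h]
  · simp only [← Finset.sum_add_distrib]
    refine Finset.sum_congr rfl fun i _ => ?_
    split_ifs <;> simp

/-- The nonnegative summands of a convergent sequence stay bounded, so they have convergent
subsequences. -/
lemma closure_add_subset_add_closure {ι : Type} [Fintype ι] {P Q : Set (ι → ℝ)}
    (hP : ∀ p ∈ P, 0 ≤ p) (hQ : ∀ q ∈ Q, 0 ≤ q) : closure (P + Q) ⊆ closure P + closure Q := by
  intro x hx
  obtain ⟨s, hs, hsx⟩ := mem_closure_iff_seq_limit.1 hx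
  choose p hp q hq hpq using fun k => Set.mem_add.1 (hs k)
  obtain ⟨M, hM⟩ := hsx.bddAbove_range
  have hbox : ∀ k, p k ∈ Set.Icc 0 M := fun k =>
    ⟨hP _ (hp k), (le_add_of_nonneg_right (hQ _ (hq k))).trans
      ((hpq k).symm ▸ hM (Set.mem_range_self k) :)⟩
  obtain ⟨p₀, -, φ, hφ, hpφ⟩ := isCompact_Icc.tendsto_subseq hbox
  have hqφ : Filter.Tendsto (q ∘ φ) Filter.atTop (𝓝 (x - p₀)) :=
    ((hsx.comp hφ.tendsto_atTop).sub hpφ).congr fun k => by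
      simp [← hpq]
  exact ⟨p₀, mem_closure_of_tendsto hpφ (Filter.Eventually.of_forall fun k => hp _),
    x - p₀, mem_closure_of_tendsto hqφ (Filter.Eventually.of_forall fun k => hq _),
    add_sub_cancel _ _⟩

end Cone

/-- By Carathéodory, `convexHull ℝ s` is a finite union of continuous images of
`stdSimplex ℝ (Fin n) × sⁿ` with `n ≤ finrank ℝ E + 1`. -/
lemma IsCompact.convexHull {E : Type*} [NormedAddCommGroup E] [NormedSpace ℝ E]
    [FiniteDimensional ℝ E] {s : Set E} (hs : IsCompact s) : IsCompact (convexHull ℝ s) := by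
  let comb (n : ℕ) : (Fin n → ℝ) × (Fin n → E) → E := fun p => ∑ i, p.1 i • p.2 i
  have heq : _root_.convexHull ℝ s = ⋃ n : Fin (Module.finrank ℝ E + 2),
      comb n '' (stdSimplex ℝ (Fin n) ×ˢ Set.univ.pi fun _ => s) := by
    refine Set.Subset.antisymm (fun x hx => ?_) (Set.iUnion_subset fun n => ?_)
    · obtain ⟨ι, _, z, w, hzs, hz, hw, hw1, rfl⟩ := eq_pos_convex_span_of_mem_convexHull hx
      have hcard : Fintype.card ι < Module.finrank ℝ E + 2 := by
        have := hz.card_le_finrank_succ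
        have := Submodule.finrank_le (vectorSpan ℝ (Set.range z))
        omega
      let e := (Fintype.equivFin ι).symm
      refine Set.mem_iUnion.2 ⟨⟨_, hcard⟩, (w ∘ e, z ∘ e),
        ⟨⟨fun i => (hw _).le, by simpa [e.sum_comp] using hw1⟩,
          fun i _ => hzs (Set.mem_range_self _)⟩, ?_⟩
      exact e.sum_comp fun i => w i • z i
    · rintro _ ⟨p, ⟨hw, hz⟩, rfl⟩
      exact (convex_convexHull ℝ s).sum_mem (fun i _ => hw.1 i) hw.2
        fun i _ => subset_convexHull ℝ s (hz i trivial)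
  rw [heq]
  exact isCompact_iUnion fun n =>
    ((isCompact_stdSimplex ℝ _).prod (isCompact_univ_pi fun _ => hs)).image (by fun_prop)

section Matroid
variable {Y : Type} [DecidableEq Y] {r g g' : Finset Y → ℝ}

lemma IsIntMatroid.apply_le_card_sub_one (hr : IsIntMatroid r) {C : Finset Y}
    (hC : r C < C.card) : r C ≤ C.card - 1 := by
  obtain ⟨z, hz⟩ := hr.2.1 C
  rw [hz] at hC ⊢
  have : z + 1 ≤ (C.card : ℤ) := by exact_mod_cast hC
  have : (z : ℝ) + 1 ≤ C.card := by exact_mod_cast this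
  linarith

lemma IsIntMatroid.apply_eq_card_of_subset (hr : IsIntMatroid r) {D E : Finset Y}
    (hDE : D ⊆ E) (hE : r E = E.card) : r D = D.card := by
  have hsum : ∑ x ∈ E \ D, r {x} ≤ ((E \ D).card : ℝ) := by
    simpa using Finset.sum_le_sum fun x (_ : x ∈ E \ D) => hr.2.2 {x}
  have hcard : ((E \ D).card : ℝ) + D.card = E.card := by
    exact_mod_cast Finset.card_sdiff_add_card_eq_card hDE
  have := hr.1.apply_union_le_add_sum D (E \ D)
  rw [Finset.union_sdiff_of_subset hDE, hE] at this
  linarith [hr.2.2 D]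

lemma IsIntMatroid.exists_isCircuit_subset (hr : IsIntMatroid r) {A : Finset Y}
    (hA : r A < A.card) : ∃ C ⊆ A, IsCircuit r C := by
  induction A using Finset.strongInduction with
  | _ A ih =>
    by_cases hmin : ∀ D ⊂ A, r D = D.card
    · exact ⟨A, subset_rfl, hA, hmin⟩
    · push Not at hmin
      obtain ⟨D, hDA, hD⟩ := hmin
      obtain ⟨C, hCD, hC⟩ := ih D hDA (lt_of_le_of_ne (hr.2.2 D) hD)
      exact ⟨C, hCD.trans hDA.subset, hC⟩

lemma IsCircuit.apply_erase (hr : IsIntMatroid r) {C : Finset Y} (hC : IsCircuit r C)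
    {x : Y} (hx : x ∈ C) : r (C.erase x) = r C := by
  have hind := hC.2 _ (Finset.erase_ssubset hx)
  have hcard : ((C.erase x).card : ℝ) = C.card - 1 := by
    rw [Finset.cast_card_erase_of_mem hx]
  linarith [hr.apply_le_card_sub_one hC.1, hr.1.2.2.1 _ _ (Finset.erase_subset x C)]

lemma IsIntMatroid.apply_singleton_eq_one_of_mem (hr : IsIntMatroid r) {D : Finset Y}
    (hD : r D = D.card) {x : Y} (hx : x ∈ D) : r {x} = 1 := by
  simpa using hr.apply_eq_card_of_subset (Finset.singleton_subset_iff.2 hx) hD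

/-- `r` is additive on an independent set and both summands are subadditive, so both are
additive there. -/
lemma IsIntMatroid.apply_eq_sum_of_add_eq (hr : IsIntMatroid r) (hg : IsPolymatroid g)
    (hg' : IsPolymatroid g') (hsum : g + g' = r) {D : Finset Y} (hD : r D = D.card) :
    g D = ∑ x ∈ D, g {x} := by
  have hsing : ∀ x ∈ D, g {x} + g' {x} = 1 := fun x hx => by
    rw [← Pi.add_apply g, hsum, hr.apply_singleton_eq_one_of_mem hD hx]
  have hsplit : ∑ x ∈ D, g {x} + ∑ x ∈ D, g' {x} = D.card := by
    rw [← Finset.sum_add_distrib, Finset.sum_congr rfl hsing]; simp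
  have hD' : g D + g' D = D.card := by rw [← Pi.add_apply g, hsum, hD]
  have hgD := hg.apply_union_le_add_sum ∅ D
  have hg'D := hg'.apply_union_le_add_sum ∅ D
  simp only [Finset.empty_union, hg.1, hg'.1, zero_add] at hgD hg'D
  linarith

lemma IsCircuit.apply_singleton_eq_of_add_eq (hr : IsIntMatroid r) (hg : IsPolymatroid g)
    (hg' : IsPolymatroid g') (hsum : g + g' = r) {C : Finset Y} (hC : IsCircuit r C) {x y : Y}
    (hx : x ∈ C) (hy : y ∈ C) : g {x} = g {y} := by
  have key : ∀ z ∈ C, g C = ∑ w ∈ C, g {w} - g {z} := fun z hz => by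
    rw [← hg.apply_eq_of_add_eq hg' hsum (Finset.erase_subset z C) (hC.apply_erase hr hz),
      hr.apply_eq_sum_of_add_eq hg hg' hsum (hC.2 _ (Finset.erase_ssubset hz)),
      ← Finset.sum_erase_add C _ hz]
    ring
  linarith [key x hx, key y hy]

lemma IsIntMatroid.eq_smul_of_add_eq (hr : IsIntMatroid r) (hg : IsPolymatroid g)
    (hg' : IsPolymatroid g') (hsum : g + g' = r) {a : ℝ} (hsing : ∀ x, g {x} = a * r {x}) :
    g = a • r := by
  funext A
  induction A using Finset.strongInduction with
  | _ A ih =>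
    by_cases hA : r A = A.card
    · rw [hr.apply_eq_sum_of_add_eq hg hg' hsum hA, Finset.sum_congr rfl fun x _ => hsing x,
        ← Finset.mul_sum, Pi.smul_apply, smul_eq_mul,
        Finset.sum_congr rfl fun x hx => hr.apply_singleton_eq_one_of_mem hA hx, hA]
      simp
    · obtain ⟨C, hCA, hC⟩ := hr.exists_isCircuit_subset (lt_of_le_of_ne (hr.2.2 A) hA)
      obtain ⟨x, hx⟩ : C.Nonempty := Finset.nonempty_iff_ne_empty.2 fun h => by
        simpa [h, hr.1.1] using hC.1
      have hrx := hC.apply_erase hr hx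
      rw [← hg.apply_erase_eq hCA hx
          (hg.apply_eq_of_add_eq hg' hsum (Finset.erase_subset x C) hrx),
        Pi.smul_apply, ← hr.1.apply_erase_eq hCA hx hrx]
      exact ih _ (Finset.erase_ssubset (hCA hx))

end Matroid

section ConnectedMatroid
variable {Y : Type} [Fintype Y] [DecidableEq Y] {r : Finset Y → ℝ}

lemma IsConnectedMatroid.apply_singleton_eq_one (hr : IsConnectedMatroid r)
    (hru : 0 < r Finset.univ) (x : Y) : r {x} = 1 := by
  by_cases hx : ∃ y, y ≠ x
  · obtain ⟨y, hyx⟩ := hx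
    obtain ⟨C, hC, hxC, hyC⟩ := hr.2 x y hyx.symm
    have hsub : {x} ⊂ C := Finset.ssubset_iff_subset_ne.2
      ⟨Finset.singleton_subset_iff.2 hxC, fun h => hyx (Finset.mem_singleton.1 (h ▸ hyC))⟩
    simpa using hC.2 _ hsub
  · push Not at hx
    have huniv : (Finset.univ : Finset Y) = {x} :=
      Finset.eq_singleton_iff_unique_mem.2 ⟨Finset.mem_univ x, fun y _ => hx y⟩
    obtain ⟨z, hz⟩ := hr.1.2.1 {x}
    have hle := hr.1.2.2 {x}
    rw [huniv] at hru
    rw [hz] at hru hle ⊢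
    have : z = 1 := by
      have : 0 < z := by exact_mod_cast hru
      have : z ≤ 1 := by exact_mod_cast hle
      omega
    simp [this]

lemma IsConnectedMatroid.exists_eq_smul_of_add_eq (hr : IsConnectedMatroid r)
    (hru : 0 < r Finset.univ) {g g' : Finset Y → ℝ} (hg : IsPolymatroid g)
    (hg' : IsPolymatroid g') (hsum : g + g' = r) : ∃ a : ℝ, g = a • r := by
  obtain ⟨y, -⟩ : (Finset.univ : Finset Y).Nonempty :=
    Finset.nonempty_iff_ne_empty.2 fun h => by simp [h, hr.1.1.1] at hru
  refine ⟨g {y}, hr.1.eq_smul_of_add_eq hg hg' hsum fun x => ?_⟩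
  rw [hr.apply_singleton_eq_one hru x, mul_one]
  rcases eq_or_ne x y with rfl | hxy
  · rfl
  · obtain ⟨C, hC, hxC, hyC⟩ := hr.2 x y hxy
    exact hC.apply_singleton_eq_of_add_eq hr.1 hg hg' hsum hxC hyC

lemma IsConnectedMatroid.inv_smul_mem_extremePoints (hr : IsConnectedMatroid r)
    (hru : 0 < r Finset.univ) :
    (r Finset.univ)⁻¹ • r ∈
      Set.extremePoints ℝ {t : Finset Y → ℝ | IsPolymatroid t ∧ t Finset.univ = 1} := by
  set R := r Finset.univ
  have key : ∀ t t' : Finset Y → ℝ, IsPolymatroid t → t Finset.univ = 1 → IsPolymatroid t' →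
      ∀ a b : ℝ, 0 < a → 0 ≤ b → a • t + b • t' = R⁻¹ • r → t = R⁻¹ • r := by
    intro t t' ht ht1 ht' a b ha hb heq
    have hsum : (R * a) • t + (R * b) • t' = r := by
      rw [mul_smul, mul_smul, ← smul_add, heq, smul_smul, mul_inv_cancel₀ hru.ne', one_smul]
    obtain ⟨c, hc⟩ := hr.exists_eq_smul_of_add_eq hru (ht.smul (by positivity))
      (ht'.smul (by positivity)) hsum
    have hca : c = a := by
      have := congrFun hc Finset.univ
      simp only [Pi.smul_apply, smul_eq_mul, ht1, mul_one] at this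
      exact (mul_left_cancel₀ hru.ne' (this.trans (mul_comm _ _))).symm
    funext A
    have := congrFun hc A
    simp only [Pi.smul_apply, smul_eq_mul, hca] at this ⊢
    field_simp
    exact mul_left_cancel₀ ha.ne' (by rw [← this]; ring)
  refine mem_extremePoints.2 ⟨⟨hr.1.1.smul (inv_nonneg.2 hru.le), by simp [R, hru.ne']⟩,
    fun t ht t' ht' ⟨a, b, ha, hb, _, heq⟩ => ⟨?_, ?_⟩⟩
  · exact key t t' ht.1 ht.2 ht'.1 a b ha hb.le heq
  · exact key t' t ht'.1 ht'.2 ht.1 b a hb ha.le (by rw [add_comm, heq])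

end ConnectedMatroid

lemma exists_tendsto_of_mem_closure_smul {Y : Type} [Fintype Y] {S : Set (Finset Y → ℝ)}
    {r : Finset Y → ℝ}
    (hr : r ∈ closure (Set.Ioi (0 : ℝ) • S)) :
    ∃ (g : ℕ → Finset Y → ℝ) (c : ℕ → ℝ), (∀ i, g i ∈ S) ∧ (∀ i, 0 < c i) ∧
      ∀ A, Filter.Tendsto (fun i => c i * g i A) Filter.atTop (𝓝 (r A)) := by
  obtain ⟨t, ht, hlim⟩ := mem_closure_iff_seq_limit.1 hr
  choose c hc g hg hcg using ht
  refine ⟨g, c, hg, hc, fun A => ?_⟩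
  simpa [← hcg] using tendsto_pi_nhds.1 hlim A

section Extraction
variable {Y : Type} [Fintype Y] [DecidableEq Y] {S : Set (Finset Y → ℝ)}

lemma inv_smul_mem_convexHull_of_mem_coneHull (hS : ∀ g ∈ S, IsPolymatroid g)
    {x : Finset Y → ℝ} (hx : x ∈ coneHull S) (hpos : 0 < x Finset.univ) :
    (x Finset.univ)⁻¹ • x ∈
      convexHull ℝ ((Set.Ioi (0 : ℝ) • S) ∩ {t | t Finset.univ = 1}) := by
  obtain ⟨m, a, f, ha, hf, rfl⟩ := hx
  set w : Fin m → ℝ := fun i => a i * f i Finset.univ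
  set I := Finset.univ.filter fun i => a i • f i ≠ 0
  have hpos_of_mem : ∀ i ∈ I, 0 < a i ∧ 0 < f i Finset.univ := fun i hi => by
    have hne := (Finset.mem_filter.1 hi).2
    refine ⟨(ha i).lt_of_ne fun h => hne (by simp [← h]),
      ((hS _ (hf i)).2.1 _).lt_of_ne fun h => hne ?_⟩
    rw [(hS _ (hf i)).eq_zero_of_apply_univ_eq_zero h.symm, smul_zero]
  have hw : ∑ i ∈ I, w i = (∑ i, a i • f i) Finset.univ := by
    rw [Finset.sum_apply]
    exact Finset.sum_filter_of_ne fun i _ hwi h =>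
      hwi (by simpa [w] using congrFun h Finset.univ)
  have hv : ∑ i ∈ I, w i • ((f i Finset.univ)⁻¹ • f i) = ∑ i, a i • f i := by
    refine (Finset.sum_congr rfl fun i hi => ?_).trans (Finset.sum_filter_ne_zero Finset.univ)
    rw [smul_smul, mul_assoc, mul_inv_cancel₀ (hpos_of_mem i hi).2.ne', mul_one]
  have hz : ∀ i ∈ I,
      (f i Finset.univ)⁻¹ • f i ∈ (Set.Ioi (0 : ℝ) • S) ∩ {t | t Finset.univ = 1} :=
    fun i hi => ⟨⟨_, inv_pos.2 (hpos_of_mem i hi).2, f i, hf i, rfl⟩,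
      inv_mul_cancel₀ (hpos_of_mem i hi).2.ne'⟩
  have := I.centerMass_mem_convexHull
    (fun i hi => (mul_pos (hpos_of_mem i hi).1 (hpos_of_mem i hi).2).le) (hw ▸ hpos) hz
  rwa [Finset.centerMass, hw, hv] at this

lemma IsConnectedMatroid.mem_closure_smul_of_mem_closure_coneHull {r : Finset Y → ℝ}
    (hr : IsConnectedMatroid r) (hru : 0 < r Finset.univ) (hS : ∀ g ∈ S, IsPolymatroid g)
    (hmem : r ∈ closure (coneHull S)) : r ∈ closure (Set.Ioi (0 : ℝ) • S) := by
  set R := r Finset.univ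
  set P := {t : Finset Y → ℝ | IsPolymatroid t ∧ t Finset.univ = 1}
  set U := closure (Set.Ioi (0 : ℝ) • S) ∩ {t | t Finset.univ = 1}
  have hUP : U ⊆ P := fun t ht => ⟨closure_minimal (by
    rintro _ ⟨c, hc, g, hg, rfl⟩
    exact (hS g hg).smul (le_of_lt hc)) isClosed_setOf_isPolymatroid ht.1, ht.2⟩
  have hU : IsCompact U := isCompact_Icc.of_isClosed_subset
    (isClosed_closure.inter (isClosed_eq (continuous_apply _) continuous_const))
    fun t ht => ⟨(hUP ht).1.2.1, fun A => ht.2 ▸ (hUP ht).1.2.2.1 A _ (Finset.subset_univ A)⟩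
  have hP : Convex ℝ P := fun s hs t ht a b ha hb hab =>
    ⟨(hs.1.smul ha).add (ht.1.smul hb), by simp [hs.2, ht.2, hab]⟩
  have hr_hull : R⁻¹ • r ∈ convexHull ℝ U := by
    obtain ⟨h, hh, hlim⟩ := mem_closure_iff_seq_limit.1 hmem
    have huniv : Filter.Tendsto (fun k => h k Finset.univ) Filter.atTop (𝓝 R) :=
      ((continuous_apply _).tendsto _).comp hlim
    refine hU.convexHull.isClosed.mem_of_tendsto ((huniv.inv₀ hru.ne').smul hlim) ?_
    filter_upwards [huniv.eventually (lt_mem_nhds hru)] with k hk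
    exact convexHull_mono (Set.inter_subset_inter_left _ subset_closure)
      (inv_smul_mem_convexHull_of_mem_coneHull hS (hh k) hk)
  have hrU : R⁻¹ • r ∈ U := extremePoints_convexHull_subset
    (inter_extremePoints_subset_extremePoints_of_subset (convexHull_min hUP hP)
      ⟨hr_hull, hr.inv_smul_mem_extremePoints hru⟩)
  rw [← smul_inv_smul₀ hru.ne' r]
  refine map_mem_closure (continuous_const_smul R) hrU.1 ?_
  rintro _ ⟨c, hc, g, hg, rfl⟩
  exact ⟨R * c, mul_pos hru hc, g, hg, mul_smul _ _ _⟩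

lemma IsConnectedMatroid.apply_univ_eq_zero_of_add_eq {r g g' : Finset Y → ℝ}
    (hr : IsConnectedMatroid r) (hru : 0 < r Finset.univ) (hS : ∀ g ∈ S, IsPolymatroid g)
    (hnot : r ∉ closure (Set.Ioi (0 : ℝ) • S)) (hg : g ∈ closure (coneHull S))
    (hg' : IsPolymatroid g') (hsum : g + g' = r) : g Finset.univ = 0 := by
  have hgp := IsPolymatroid.of_mem_closure_coneHull hS hg
  obtain ⟨a, rfl⟩ := hr.exists_eq_smul_of_add_eq hru hgp hg' hsum
  have ha : 0 ≤ a := nonneg_of_mul_nonneg_left (hgp.2.1 Finset.univ) hru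
  rcases ha.eq_or_lt with rfl | ha
  · simp
  · refine absurd (hr.mem_closure_smul_of_mem_closure_coneHull hru hS ?_) hnot
    simpa [smul_smul, inv_mul_cancel₀ ha.ne'] using
      smul_mem_closure_coneHull (inv_nonneg.2 ha.le) hg

end Extraction

section Representable
variable {X Y : Type}

lemma IsRepresentable.isPolymatroid [DecidableEq X] {h : Finset X → ℝ}
    (hr : IsRepresentable h) : IsPolymatroid h := by
  obtain ⟨⟨F, W, V, hV⟩⟩ := hr
  refine ⟨by simp [hV], fun A => by rw [hV]; positivity, fun A B hAB => ?_, fun A B => ?_⟩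
  · rw [hV, hV]
    exact_mod_cast Submodule.finrank_mono (Finset.sup_mono hAB)
  · have hinter : finrank F ↥((A ∩ B).sup V) ≤ finrank F ↥(A.sup V ⊓ B.sup V) :=
      Submodule.finrank_mono (le_inf (Finset.sup_mono Finset.inter_subset_left)
        (Finset.sup_mono Finset.inter_subset_right))
    have hmod := Submodule.finrank_sup_add_finrank_inf_eq (A.sup V) (B.sup V)
    rw [hV, hV, hV, hV, Finset.sup_union]
    exact_mod_cast hmod ▸ Nat.add_le_add_left hinter _

lemma EvenRepresentable.isRepresentable {h : Finset X → ℝ} (hr : EvenRepresentable h) :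
    IsRepresentable h :=
  ⟨hr.choose⟩

lemma OddRepresentable.isRepresentable {h : Finset X → ℝ} (hr : OddRepresentable h) :
    IsRepresentable h :=
  ⟨hr.choose⟩

lemma EvenRepresentable.isPolymatroid [DecidableEq X] {h : Finset X → ℝ}
    (hr : EvenRepresentable h) : IsPolymatroid h :=
  hr.isRepresentable.isPolymatroid

lemma OddRepresentable.isPolymatroid [DecidableEq X] {h : Finset X → ℝ}
    (hr : OddRepresentable h) : IsPolymatroid h :=
  hr.isRepresentable.isPolymatroid

lemma IsRepresentable.even_or_odd {h : Finset X → ℝ} (hr : IsRepresentable h) :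
    EvenRepresentable h ∨ OddRepresentable h := by
  obtain ⟨r⟩ := hr
  have := r.fieldF
  have := r.fintypeF
  obtain ⟨p, -, n, hp, hcard⟩ := FiniteField.card' r.F
  rw [← Nat.card_eq_fintype_card] at hcard
  rcases hp.eq_two_or_odd' with rfl | hodd
  · exact Or.inl ⟨r, n, n.pos, hcard⟩
  · exact Or.inr ⟨r, p, n, hp, hodd, n.pos, hcard⟩

def SubspaceRep.zero (X F : Type) [Field F] [Fintype F] : SubspaceRep (0 : Finset X → ℝ) where
  F := F
  W := F
  V := fun _ => ⊥
  rank_eq A := by rw [Finset.sup_bot]; simp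

lemma evenRepresentable_zero : EvenRepresentable (0 : Finset X → ℝ) :=
  ⟨SubspaceRep.zero X (ZMod 2), 1, one_pos, by simp [SubspaceRep.zero]⟩

lemma oddRepresentable_zero : OddRepresentable (0 : Finset X → ℝ) :=
  ⟨SubspaceRep.zero X (ZMod 3), 3, 1, Nat.prime_three, by decide, one_pos,
    by simp [SubspaceRep.zero]⟩

def SubspaceRep.comap {h : Finset Y → ℝ} (r : SubspaceRep h) (e : X ↪ Y) :
    SubspaceRep (h ∘ Finset.map e) :=
  { r with
    V := r.V ∘ e
    rank_eq := fun A => (r.rank_eq (A.map e)).trans (by rw [Finset.sup_map]) }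

lemma EvenRepresentable.comp_map {h : Finset Y → ℝ} (hr : EvenRepresentable h) (e : X ↪ Y) :
    EvenRepresentable (h ∘ Finset.map e) := by
  obtain ⟨r, m, hm, hcard⟩ := hr
  exact ⟨r.comap e, m, hm, hcard⟩

lemma OddRepresentable.comp_map {h : Finset Y → ℝ} (hr : OddRepresentable h) (e : X ↪ Y) :
    OddRepresentable (h ∘ Finset.map e) := by
  obtain ⟨r, p, m, hp, hodd, hm, hcard⟩ := hr
  exact ⟨r.comap e, p, m, hp, hodd, hm, hcard⟩

lemma closure_coneHull_isRepresentable_subset [Fintype Y] [DecidableEq Y] :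
    closure (coneHull {g : Finset Y → ℝ | IsRepresentable g}) ⊆
      closure (coneHull {g | EvenRepresentable g}) + closure (coneHull {g | OddRepresentable g}) := by
  refine (closure_mono ((coneHull_mono fun _ hg => hg.even_or_odd).trans
    (coneHull_union_subset_add evenRepresentable_zero oddRepresentable_zero))).trans
    (closure_add_subset_add_closure (fun _ hp => ?_) (fun _ hp => ?_))
  exacts [(IsPolymatroid.of_mem_coneHull (fun _ => EvenRepresentable.isPolymatroid) hp).2.1,
    (IsPolymatroid.of_mem_coneHull (fun _ => OddRepresentable.isPolymatroid) hp).2.1]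

end Representable

section DirectSum
variable {X1 X2 : Type}

@[simp] lemma Finset.toLeft_map_inl (A : Finset X1) :
    (A.map (Function.Embedding.inl : X1 ↪ X1 ⊕ X2)).toLeft = A := by
  ext; simp

@[simp] lemma Finset.toRight_map_inl (A : Finset X1) :
    (A.map (Function.Embedding.inl : X1 ↪ X1 ⊕ X2)).toRight = ∅ := by
  ext; simp

@[simp] lemma Finset.toLeft_map_inr (A : Finset X2) :
    (A.map (Function.Embedding.inr : X2 ↪ X1 ⊕ X2)).toLeft = ∅ := by
  ext; simp

@[simp] lemma Finset.toRight_map_inr (A : Finset X2) :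
    (A.map (Function.Embedding.inr : X2 ↪ X1 ⊕ X2)).toRight = A := by
  ext; simp

variable [Fintype X1] [Fintype X2]
  {Φ1 : Finset X1 → ℝ} {Φ2 : Finset X2 → ℝ} {Φ : Finset (X1 ⊕ X2) → ℝ} {ε : ℝ}

lemma perturbation_apply_univ_s11 (hΦ : ∀ A, Φ A = Φ1 A.toLeft + Φ2 A.toRight) (hε : 0 ≤ ε) :
    min (Φ Finset.univ) (Φ Finset.univ - ε) = Φ1 Finset.univ + Φ2 Finset.univ - ε := by
  rw [min_eq_right (by linarith), hΦ, Finset.toLeft_univ, Finset.toRight_univ]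

variable [DecidableEq X1] [DecidableEq X2]

lemma perturbation_comp_map_inl (hΦ : ∀ A, Φ A = Φ1 A.toLeft + Φ2 A.toRight)
    (h1 : IsPolymatroid Φ1) (h2 : IsPolymatroid Φ2) (hε : ε ≤ Φ2 Finset.univ) :
    (fun A => min (Φ A) (Φ Finset.univ - ε)) ∘ Finset.map .inl = Φ1 := by
  funext A
  simp only [Function.comp_apply, hΦ, Finset.toLeft_map_inl, Finset.toRight_map_inl, h2.1,
    add_zero, Finset.toLeft_univ, Finset.toRight_univ]
  exact min_eq_left (by linarith [h1.2.2.1 A _ (Finset.subset_univ A)])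

lemma perturbation_comp_map_inr (hΦ : ∀ A, Φ A = Φ1 A.toLeft + Φ2 A.toRight)
    (h1 : IsPolymatroid Φ1) (h2 : IsPolymatroid Φ2) (hε : ε ≤ Φ1 Finset.univ) :
    (fun A => min (Φ A) (Φ Finset.univ - ε)) ∘ Finset.map .inr = Φ2 := by
  funext A
  simp only [Function.comp_apply, hΦ, Finset.toLeft_map_inr, Finset.toRight_map_inr, h1.1,
    zero_add, Finset.toLeft_univ, Finset.toRight_univ]
  exact min_eq_left (by linarith [h2.2.2.1 A _ (Finset.subset_univ A)])

end DirectSum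

theorem direct_sum_perturbation_not_cc_representable_general
    {X1 X2 : Type} [Fintype X1] [Fintype X2] [DecidableEq X1] [DecidableEq X2]
    (Φ1 : Finset X1 → ℝ) (Φ2 : Finset X2 → ℝ)
    (h1conn : IsConnectedMatroid Φ1) (h2conn : IsConnectedMatroid Φ2)
    (h1notodd : ¬ AlmostOddRepresentable Φ1)
    (h2noteven : ¬ AlmostEvenRepresentable Φ2)
    (Φ : Finset (X1 ⊕ X2) → ℝ)
    (hΦ : ∀ A : Finset (X1 ⊕ X2), Φ A = Φ1 A.toLeft + Φ2 A.toRight)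
    (ε : ℝ) (hε0 : 0 < ε) (hε1 : ε ≤ min (Φ1 Finset.univ) (Φ2 Finset.univ)) :
    ¬ CcRepresentable (fun A => min (Φ A) (Φ Finset.univ - ε)) := by
  intro hcc
  obtain ⟨hεΦ1, hεΦ2⟩ := le_min_iff.1 hε1
  have hleft := perturbation_comp_map_inl hΦ h1conn.1.1 h2conn.1.1 hεΦ2
  have hright := perturbation_comp_map_inr hΦ h1conn.1.1 h2conn.1.1 hεΦ1
  obtain ⟨e, he, o, ho, heo : e + o = _⟩ := closure_coneHull_isRepresentable_subset hcc
  have he_poly :=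
    IsPolymatroid.of_mem_closure_coneHull (fun _ => EvenRepresentable.isPolymatroid) he
  have ho_poly :=
    IsPolymatroid.of_mem_closure_coneHull (fun _ => OddRepresentable.isPolymatroid) ho
  have ho1 : o (Finset.univ.map .inl) = 0 := h1conn.apply_univ_eq_zero_of_add_eq
    (hε0.trans_le hεΦ1) (fun _ => OddRepresentable.isPolymatroid)
    (fun h => h1notodd (exists_tendsto_of_mem_closure_smul h))
    (comp_mem_closure_coneHull (fun _ hg => hg.comp_map _) ho) (he_poly.comp_map .inl)
    (by rw [← hleft, ← heo, add_comm]; rfl)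
  have he2 : e (Finset.univ.map .inr) = 0 := h2conn.apply_univ_eq_zero_of_add_eq
    (hε0.trans_le hεΦ2) (fun _ => EvenRepresentable.isPolymatroid)
    (fun h => h2noteven (exists_tendsto_of_mem_closure_smul h))
    (comp_mem_closure_coneHull (fun _ hg => hg.comp_map _) he) (ho_poly.comp_map .inr)
    (by rw [← hright, ← heo]; rfl)
  have h1 : e (Finset.univ.map .inl) + o (Finset.univ.map .inl) = Φ1 Finset.univ :=
    (congrFun heo _).trans (congrFun hleft Finset.univ)
  have h2 : e (Finset.univ.map .inr) + o (Finset.univ.map .inr) = Φ2 Finset.univ :=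
    (congrFun heo _).trans (congrFun hright Finset.univ)
  have hX : e Finset.univ + o Finset.univ = Φ1 Finset.univ + Φ2 Finset.univ - ε :=
    (congrFun heo _).trans (perturbation_apply_univ_s11 hΦ hε0.le)
  linarith [he_poly.2.2.1 _ _ (Finset.subset_univ (Finset.univ.map .inl)),
    ho_poly.2.2.1 _ _ (Finset.subset_univ (Finset.univ.map .inr))]

/-- let `(X_1, Φ_1)` be a connected matroid that is even representable but
not almost odd representable, `(X_2, Φ_2)` a connected matroid that is odd representable
but not almost even representable (disjoint ground sets, modelled by a sum type), and
`Φ` their direct sum. For `0 < ε ≤ min(Φ_1(X_1), Φ_2(X_2))`, the ε-perturbation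
`Φ^ε(A) = min(Φ(A), Φ(X) − ε)` is not cc-representable. -/
theorem direct_sum_perturbation_not_cc_representable
    {X1 X2 : Type} [Fintype X1] [Fintype X2] [DecidableEq X1] [DecidableEq X2]
    (Φ1 : Finset X1 → ℝ) (Φ2 : Finset X2 → ℝ)
    (h1conn : IsConnectedMatroid Φ1) (h2conn : IsConnectedMatroid Φ2)
    (h1even : EvenRepresentable Φ1) (h1notodd : ¬ AlmostOddRepresentable Φ1)
    (h2odd : OddRepresentable Φ2) (h2noteven : ¬ AlmostEvenRepresentable Φ2)
    (Φ : Finset (X1 ⊕ X2) → ℝ)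
    (hΦ : ∀ A : Finset (X1 ⊕ X2), Φ A = Φ1 A.toLeft + Φ2 A.toRight)
    (ε : ℝ) (hε0 : 0 < ε) (hε1 : ε ≤ min (Φ1 Finset.univ) (Φ2 Finset.univ)) :
    ¬ CcRepresentable (fun A => min (Φ A) (Φ Finset.univ - ε)) :=
  direct_sum_perturbation_not_cc_representable_general Φ1 Φ2 h1conn h2conn h1notodd h2noteven Φ hΦ ε
    hε0 hε1
end

section
/- Let u_1, u_2, u_3 be linearly independent vectors in a finite-dimensional vector space over a finite field of characteristic 2, and define the seven one-dimensional subspaces Y_1 = ⟨u_1⟩, Y_2 = ⟨u_2⟩, Y_3 = ⟨u_3⟩, W_1 = ⟨u_1+u_2⟩, W_2 = ⟨u_2+u_3⟩, W_3 = ⟨u_1+u_2+u_3⟩, W_4 = ⟨u_1+u_3⟩. Let Φ_1 be the rank function on the ground set X_1 = {Y_1,Y_2,Y_3,W_1,W_2,W_3,W_4} given by Φ_1(A) = dim(span of the union of the subspaces in A). Then the matroid (X_1, Φ_1) (the Fano matroid F_7) is even representable but is not almost odd representable. -/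
open Module Filter Topology
set_option linter.unusedSectionVars false

/-! ### Auxiliary machinery for the proof -/

section FanoAux

open Module

variable {K W : Type*} [Field K] [AddCommGroup W] [Module K W]

private lemma fano_uniq3 {A B C : Submodule K W} (hAB : A ⊓ B = ⊥)
    (hABC : (A ⊔ B) ⊓ C = ⊥)
    {a a' b b' c c' : W} (ha : a ∈ A) (ha' : a' ∈ A) (hb : b ∈ B) (hb' : b' ∈ B)
    (hc : c ∈ C) (hc' : c' ∈ C) (h : a + b + c = a' + b' + c') :
    a = a' ∧ b = b' ∧ c = c' := by
  have hcc : c - c' ∈ (A ⊔ B) ⊓ C := by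
    refine Submodule.mem_inf.mpr ⟨?_, sub_mem hc hc'⟩
    have : c - c' = (a' - a) + (b' - b) := by linear_combination (norm := abel) h
    rw [this]
    exact add_mem (Submodule.mem_sup_left (sub_mem ha' ha))
      (Submodule.mem_sup_right (sub_mem hb' hb))
  rw [hABC, Submodule.mem_bot, sub_eq_zero] at hcc
  have hab : a - a' ∈ A ⊓ B := by
    refine Submodule.mem_inf.mpr ⟨sub_mem ha ha', ?_⟩
    have : a - a' = b' - b := by subst hcc; linear_combination (norm := abel) h
    rw [this]; exact sub_mem hb' hb
  rw [hAB, Submodule.mem_bot, sub_eq_zero] at hab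
  subst hab hcc
  refine ⟨rfl, ?_, rfl⟩
  have : b - b' = 0 := by linear_combination (norm := abel) h
  exact sub_eq_zero.mp this

/-- Core characteristic-≠2 obstruction for the Fano configuration. -/
private lemma fano_core (h2 : ∀ x : W, x + x = 0 → x = 0)
    {A B C P Q R Z : Submodule K W}
    (hAB : A ⊓ B = ⊥) (hABC : (A ⊔ B) ⊓ C = ⊥)
    (hP : P ≤ A ⊔ B) (hPA : P ⊓ A = ⊥) (hPB : P ⊓ B = ⊥)
    (hQ : Q ≤ B ⊔ C) (hQB : Q ⊓ B = ⊥) (hQC : Q ⊓ C = ⊥)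
    (hR : R ≤ (A ⊔ C) ⊓ (P ⊔ Q))
    (hZ : Z ≤ (C ⊔ P) ⊓ ((A ⊔ Q) ⊓ (B ⊔ R))) : Z = ⊥ := by
  rw [eq_bot_iff]
  intro z hz
  have hz' := hZ hz
  rw [Submodule.mem_inf, Submodule.mem_inf] at hz'
  obtain ⟨hz1, hz2, hz3⟩ := hz'
  obtain ⟨c0, hc0, p0, hp0, hzcp⟩ := Submodule.mem_sup.mp hz1
  obtain ⟨a0, ha0, q0, hq0, hzaq⟩ := Submodule.mem_sup.mp hz2
  obtain ⟨b0, hb0, r0, hr0, hzbr⟩ := Submodule.mem_sup.mp hz3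
  have hr0' := hR hr0
  rw [Submodule.mem_inf] at hr0'
  obtain ⟨a2, ha2, c2, hc2, hrac⟩ := Submodule.mem_sup.mp hr0'.1
  obtain ⟨p2, hp2, q2, hq2, hrpq⟩ := Submodule.mem_sup.mp hr0'.2
  obtain ⟨ap0, hap0, bp0, hbp0, hp0d⟩ := Submodule.mem_sup.mp (hP hp0)
  obtain ⟨ap2, hap2, bp2, hbp2, hp2d⟩ := Submodule.mem_sup.mp (hP hp2)
  obtain ⟨bq0, hbq0, cq0, hcq0, hq0d⟩ := Submodule.mem_sup.mp (hQ hq0)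
  obtain ⟨bq2, hbq2, cq2, hcq2, hq2d⟩ := Submodule.mem_sup.mp (hQ hq2)
  obtain ⟨e12a, e12b, e12c⟩ := fano_uniq3 hAB hABC hap0 ha0 hbp0 hbq0 hc0 hcq0
    (by linear_combination (norm := abel) hp0d + hzcp - hq0d - hzaq)
  obtain ⟨e13a, e13b, e13c⟩ := fano_uniq3 hAB hABC hap0 ha2 hbp0 hb0 hc0 hc2
    (by linear_combination (norm := abel) hp0d + hzcp - hzbr - hrac)
  obtain ⟨era, erb, erc⟩ := fano_uniq3 hAB hABC ha2 hap2 (Submodule.zero_mem B)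
    (add_mem hbp2 hbq2) hc2 hcq2
    (by linear_combination (norm := abel) hrac - hrpq - hp2d - hq2d)
  have hap : ap0 = ap2 := e13a.trans era
  have hpp : p0 = p2 := by
    have hmem : p0 - p2 ∈ P ⊓ B := by
      refine Submodule.mem_inf.mpr ⟨sub_mem hp0 hp2, ?_⟩
      have h' : p0 - p2 = bp0 - bp2 := by
        linear_combination (norm := abel) -hp0d + hp2d + hap
      rw [h']; exact sub_mem hbp0 hbp2
    rw [hPB, Submodule.mem_bot, sub_eq_zero] at hmem; exact hmem
  have hbpeq : bp0 = bp2 := by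
    have h' : bp0 - bp2 = 0 := by
      linear_combination (norm := abel) hp0d - hp2d + hpp - hap
    exact sub_eq_zero.mp h'
  have hcq : cq0 = cq2 := by rw [← e12c, e13c, erc]
  have hqq : q0 = q2 := by
    have hmem : q0 - q2 ∈ Q ⊓ B := by
      refine Submodule.mem_inf.mpr ⟨sub_mem hq0 hq2, ?_⟩
      have h' : q0 - q2 = bq0 - bq2 := by
        linear_combination (norm := abel) -hq0d + hq2d + hcq
      rw [h']; exact sub_mem hbq0 hbq2
    rw [hQB, Submodule.mem_bot, sub_eq_zero] at hmem; exact hmem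
  have hbqeq : bq0 = bq2 := by
    have h' : bq0 - bq2 = 0 := by
      linear_combination (norm := abel) hq0d - hq2d + hqq - hcq
    exact sub_eq_zero.mp h'
  have hbb : bp0 + bp0 = 0 := by
    have : bp2 + bq2 = 0 := erb.symm
    rw [← hbpeq, ← hbqeq, ← e12b] at this
    exact this
  have hbp0z : bp0 = 0 := h2 _ hbb
  have hp0z : p0 = 0 := by
    have hmem : p0 ∈ P ⊓ A := by
      refine Submodule.mem_inf.mpr ⟨hp0, ?_⟩
      have : p0 = ap0 := by rw [← hp0d, hbp0z, add_zero]
      rw [this]; exact hap0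
    rw [hPA, Submodule.mem_bot] at hmem; exact hmem
  have hq0z : q0 = 0 := by
    have hmem : q0 ∈ Q ⊓ C := by
      refine Submodule.mem_inf.mpr ⟨hq0, ?_⟩
      have : q0 = cq0 := by rw [← hq0d, ← e12b, hbp0z, zero_add]
      rw [this]; exact hcq0
    rw [hQC, Submodule.mem_bot] at hmem; exact hmem
  have hzc : z = c0 := by rw [← hzcp, hp0z, add_zero]
  have hza : z = a0 := by rw [← hzaq, hq0z, add_zero]
  have : z ∈ (A ⊔ B) ⊓ C := Submodule.mem_inf.mpr
    ⟨Submodule.mem_sup_left (hza ▸ ha0), hzc ▸ hc0⟩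
  rw [hABC, Submodule.mem_bot] at this
  simp [this]

variable [FiniteDimensional K W]

private lemma frk_sup_le_add (X Y : Submodule K W) :
    finrank K ↥(X ⊔ Y) ≤ finrank K X + finrank K Y := by
  have := Submodule.finrank_sup_add_finrank_inf_eq X Y; omega

private lemma frk_inf_lower {X N Y : Submodule K W} (h : X ⊔ N ≤ Y) :
    finrank K X + finrank K N ≤ finrank K ↥(X ⊓ N) + finrank K Y := by
  have h1 := Submodule.finrank_sup_add_finrank_inf_eq X N
  have h2 := Submodule.finrank_mono h
  omega

private lemma frk_inf_mono {X N N' : Submodule K W} (h : N' ≤ N) :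
    finrank K ↥(X ⊓ N) + finrank K N' ≤ finrank K ↥(X ⊓ N') + finrank K N := by
  have h1 := Submodule.finrank_sup_add_finrank_inf_eq (X ⊓ N) N'
  have h2 : (X ⊓ N) ⊓ N' = X ⊓ N' := by rw [inf_assoc, inf_eq_right.mpr h]
  have h3 : (X ⊓ N) ⊔ N' ≤ N := sup_le inf_le_right h
  have h4 := Submodule.finrank_mono h3
  rw [h2] at h1; omega

private lemma frk_sup_mono1 {X X' : Submodule K W} (Y : Submodule K W) (h : X' ≤ X) :
    finrank K ↥(X ⊔ Y) + finrank K X' ≤ finrank K ↥(X' ⊔ Y) + finrank K X := by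
  have h1 := Submodule.finrank_sup_add_finrank_inf_eq (X' ⊔ Y) X
  have h2 : (X' ⊔ Y) ⊔ X = X ⊔ Y := by
    rw [sup_comm X' Y, sup_assoc, sup_eq_right.mpr h, sup_comm]
  have h3 : X' ≤ (X' ⊔ Y) ⊓ X := le_inf le_sup_left h
  have h4 := Submodule.finrank_mono h3
  rw [h2] at h1; omega

private lemma frk_sup_mono2 {X X' Y Y' : Submodule K W} (hX : X' ≤ X) (hY : Y' ≤ Y) :
    finrank K ↥(X ⊔ Y) + finrank K X' + finrank K Y' ≤
      finrank K ↥(X' ⊔ Y') + finrank K X + finrank K Y := by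
  have h1 := frk_sup_mono1 (K := K) Y hX
  have h2 := frk_sup_mono1 (K := K) X' hY
  rw [sup_comm Y X', sup_comm Y' X'] at h2
  omega

private lemma fano_shrink2 (P₀ T₁ T₂ : Submodule K W) :
    ∃ P : Submodule K W, P ≤ P₀ ∧ P ⊓ T₁ = ⊥ ∧ P ⊓ T₂ = ⊥ ∧
      finrank K P₀ ≤ finrank K P + finrank K ↥(P₀ ⊓ T₁) + finrank K ↥(P₀ ⊓ T₂) := by
  set U : Submodule K W := P₀ ⊓ T₁ ⊔ P₀ ⊓ T₂ with hU
  have hUP : U ≤ P₀ := sup_le inf_le_left inf_le_left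
  obtain ⟨c, hc⟩ := Submodule.exists_isCompl (Submodule.comap P₀.subtype U)
  refine ⟨Submodule.map P₀.subtype c, Submodule.map_subtype_le _ _, ?_, ?_, ?_⟩
  · rw [eq_bot_iff]
    rintro x ⟨hxP, hxT⟩
    obtain ⟨y, hy, rfl⟩ := hxP
    have hyU : (y : W) ∈ U := le_sup_left (α := Submodule K W)
      (Submodule.mem_inf.mpr ⟨y.2, hxT⟩)
    have : y ∈ Submodule.comap P₀.subtype U ⊓ c := ⟨hyU, hy⟩
    rw [hc.inf_eq_bot, Submodule.mem_bot] at this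
    simp [this]
  · rw [eq_bot_iff]
    rintro x ⟨hxP, hxT⟩
    obtain ⟨y, hy, rfl⟩ := hxP
    have hyU : (y : W) ∈ U := le_sup_right (α := Submodule K W)
      (Submodule.mem_inf.mpr ⟨y.2, hxT⟩)
    have : y ∈ Submodule.comap P₀.subtype U ⊓ c := ⟨hyU, hy⟩
    rw [hc.inf_eq_bot, Submodule.mem_bot] at this
    simp [this]
  · have hdim := Submodule.finrank_add_eq_of_isCompl hc
    have e1 : finrank K ↥(Submodule.comap P₀.subtype U) = finrank K U :=
      (Submodule.comapSubtypeEquivOfLe hUP).finrank_eq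
    have e2 : finrank K ↥(Submodule.map P₀.subtype c) = finrank K c :=
      (Submodule.equivMapOfInjective _ (Submodule.injective_subtype P₀) c).symm.finrank_eq
    have e3 : finrank K U ≤ finrank K ↥(P₀ ⊓ T₁) + finrank K ↥(P₀ ⊓ T₂) :=
      frk_sup_le_add _ _
    omega

private lemma fano_shrink1 (P₀ T : Submodule K W) :
    ∃ P : Submodule K W, P ≤ P₀ ∧ P ⊓ T = ⊥ ∧
      finrank K P₀ ≤ finrank K P + finrank K ↥(P₀ ⊓ T) := by
  obtain ⟨P, h1, h2, _, h4⟩ := fano_shrink2 P₀ T (⊥ : Submodule K W)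
  have : finrank K ↥(P₀ ⊓ (⊥ : Submodule K W)) = 0 := by
    rw [inf_bot_eq]; exact finrank_bot K W
  exact ⟨P, h1, h2, by omega⟩

set_option maxHeartbeats 2000000 in
/-- The characteristic-dependent linear rank inequality: over any field in which
`2 ≠ 0`, the subspace rank function of any seven subspaces satisfies this linear
inequality, which the Fano matroid violates. -/
private theorem fano_odd_ineq (h2 : ∀ x : W, x + x = 0 → x = 0) (V : Fin 7 → Submodule K W) :
    finrank K (V 5)
      + finrank K ↥(V 0 ⊔ V 4) + finrank K ↥(V 1 ⊔ V 6) + finrank K ↥(V 2 ⊔ V 3)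
      + finrank K ↥(V 0 ⊔ V 2) + finrank K ↥(V 3 ⊔ V 4)
      + 2 * finrank K ↥(V 0 ⊔ V 1) + 2 * finrank K ↥(V 0 ⊔ V 3)
      + 2 * finrank K ↥(V 1 ⊔ V 3) + 2 * finrank K ↥(V 1 ⊔ V 2)
      + 2 * finrank K ↥(V 1 ⊔ V 4) + 2 * finrank K ↥(V 2 ⊔ V 4)
      + 13 * finrank K ↥(V 0 ⊔ (V 1 ⊔ V 2))
    ≤ finrank K ↥(V 0 ⊔ (V 4 ⊔ V 5)) + finrank K ↥(V 1 ⊔ (V 5 ⊔ V 6))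
      + finrank K ↥(V 2 ⊔ (V 3 ⊔ V 5)) + finrank K ↥(V 0 ⊔ (V 2 ⊔ V 6))
      + finrank K ↥(V 3 ⊔ (V 4 ⊔ V 6))
      + 2 * finrank K ↥(V 0 ⊔ (V 1 ⊔ V 3)) + 2 * finrank K ↥(V 1 ⊔ (V 2 ⊔ V 4))
      + 6 * finrank K (V 0) + 9 * finrank K (V 1) + 6 * finrank K (V 2)
      + 4 * finrank K (V 3) + 4 * finrank K (V 4)
      + 4 * finrank K ↥(V 1 ⊔ V 2) + 5 * finrank K ↥(V 0 ⊔ V 2)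
      + 4 * finrank K ↥(V 0 ⊔ V 1) := by
  obtain ⟨A', hA'le, hA'T, FA⟩ := fano_shrink1 (V 0) (V 1 ⊔ V 2)
  have EA := Submodule.finrank_sup_add_finrank_inf_eq (V 0) (V 1 ⊔ V 2)
  obtain ⟨B', hB'le, hB'T, FB⟩ := fano_shrink1 (V 1) (A' ⊔ V 2)
  have MB : finrank K ↥(V 1 ⊓ (A' ⊔ V 2)) ≤ finrank K ↥(V 1 ⊓ (V 0 ⊔ V 2)) :=
    Submodule.finrank_mono (inf_le_inf_left _ (sup_le_sup_right hA'le _))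
  have EB := Submodule.finrank_sup_add_finrank_inf_eq (V 1) (V 0 ⊔ V 2)
  rw [show V 1 ⊔ (V 0 ⊔ V 2) = V 0 ⊔ (V 1 ⊔ V 2) from sup_left_comm _ _ _] at EB
  obtain ⟨C', hC'le, hC'T, FC⟩ := fano_shrink1 (V 2) (A' ⊔ B')
  have MC : finrank K ↥(V 2 ⊓ (A' ⊔ B')) ≤ finrank K ↥(V 2 ⊓ (V 0 ⊔ V 1)) :=
    Submodule.finrank_mono (inf_le_inf_left _ (sup_le_sup hA'le hB'le))
  have EC := Submodule.finrank_sup_add_finrank_inf_eq (V 2) (V 0 ⊔ V 1)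
  rw [show V 2 ⊔ (V 0 ⊔ V 1) = V 0 ⊔ (V 1 ⊔ V 2) by
    rw [sup_left_comm, sup_comm (V 2) (V 1)]] at EC
  have hAB : A' ⊓ B' = ⊥ := by
    rw [eq_bot_iff, ← hA'T]
    exact inf_le_inf_left _ (le_trans hB'le le_sup_left)
  have hABC : (A' ⊔ B') ⊓ C' = ⊥ := by rw [inf_comm]; exact hC'T
  have E1P := Submodule.finrank_sup_add_finrank_inf_eq (V 3) (V 0 ⊔ V 1)
  rw [show V 3 ⊔ (V 0 ⊔ V 1) = V 0 ⊔ (V 1 ⊔ V 3) by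
    rw [sup_left_comm, sup_comm (V 3) (V 1)]] at E1P
  have M1P := frk_inf_mono (X := V 3) (sup_le_sup hA'le hB'le)
  have SP := frk_sup_mono2 hA'le hB'le
  obtain ⟨P, hPle, hPA, hPB, FP⟩ := fano_shrink2 (V 3 ⊓ (A' ⊔ B')) A' B'
  have hPle3 : P ≤ V 3 := le_trans hPle inf_le_left
  have hPAB : P ≤ A' ⊔ B' := le_trans hPle inf_le_right
  have MP1 : finrank K ↥(V 3 ⊓ (A' ⊔ B') ⊓ A') ≤ finrank K ↥(V 0 ⊓ V 3) :=
    Submodule.finrank_mono (le_inf (le_trans inf_le_right hA'le)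
      (le_trans inf_le_left inf_le_left))
  have E2P := Submodule.finrank_sup_add_finrank_inf_eq (V 0) (V 3)
  have MP2 : finrank K ↥(V 3 ⊓ (A' ⊔ B') ⊓ B') ≤ finrank K ↥(V 1 ⊓ V 3) :=
    Submodule.finrank_mono (le_inf (le_trans inf_le_right hB'le)
      (le_trans inf_le_left inf_le_left))
  have E3P := Submodule.finrank_sup_add_finrank_inf_eq (V 1) (V 3)
  have E1Q := Submodule.finrank_sup_add_finrank_inf_eq (V 4) (V 1 ⊔ V 2)
  rw [show V 4 ⊔ (V 1 ⊔ V 2) = V 1 ⊔ (V 2 ⊔ V 4) by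
    rw [sup_left_comm, sup_comm (V 4) (V 2)]] at E1Q
  have M1Q := frk_inf_mono (X := V 4) (sup_le_sup hB'le hC'le)
  have SQ := frk_sup_mono2 hB'le hC'le
  obtain ⟨Q, hQle, hQB, hQC, FQ⟩ := fano_shrink2 (V 4 ⊓ (B' ⊔ C')) B' C'
  have hQle4 : Q ≤ V 4 := le_trans hQle inf_le_left
  have hQBC : Q ≤ B' ⊔ C' := le_trans hQle inf_le_right
  have MQ1 : finrank K ↥(V 4 ⊓ (B' ⊔ C') ⊓ B') ≤ finrank K ↥(V 1 ⊓ V 4) :=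
    Submodule.finrank_mono (le_inf (le_trans inf_le_right hB'le)
      (le_trans inf_le_left inf_le_left))
  have E2Q := Submodule.finrank_sup_add_finrank_inf_eq (V 1) (V 4)
  have MQ2 : finrank K ↥(V 4 ⊓ (B' ⊔ C') ⊓ C') ≤ finrank K ↥(V 2 ⊓ V 4) :=
    Submodule.finrank_mono (le_inf (le_trans inf_le_right hC'le)
      (le_trans inf_le_left inf_le_left))
  have E3Q := Submodule.finrank_sup_add_finrank_inf_eq (V 2) (V 4)
  have E1R := Submodule.finrank_sup_add_finrank_inf_eq (V 6) (V 0 ⊔ V 2)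
  rw [show V 6 ⊔ (V 0 ⊔ V 2) = V 0 ⊔ (V 2 ⊔ V 6) by
    rw [sup_left_comm, sup_comm (V 6) (V 2)]] at E1R
  have M1R := frk_inf_mono (X := V 6) (sup_le_sup hA'le hC'le)
  have SR := frk_sup_mono2 hA'le hC'le
  set R0 : Submodule K W := V 6 ⊓ (A' ⊔ C') with hR0
  have LR : finrank K R0 + finrank K ↥(P ⊔ Q) ≤
      finrank K ↥(R0 ⊓ (P ⊔ Q)) + finrank K ↥(V 3 ⊔ (V 4 ⊔ V 6)) :=
    frk_inf_lower (sup_le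
      (le_trans inf_le_left (le_trans le_sup_right le_sup_right))
      (sup_le (le_trans hPle3 le_sup_left)
        (le_trans hQle4 (le_trans le_sup_left le_sup_right))))
  have SPQ := frk_sup_mono2 hPle3 hQle4
  set R : Submodule K W := R0 ⊓ (P ⊔ Q) with hR
  have hRle : R ≤ (A' ⊔ C') ⊓ (P ⊔ Q) :=
    le_inf (le_trans inf_le_left inf_le_right) inf_le_right
  have hRle6 : R ≤ V 6 := le_trans inf_le_left inf_le_left
  have E1Z := Submodule.finrank_sup_add_finrank_inf_eq (V 5) (V 2 ⊔ V 3)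
  rw [show V 5 ⊔ (V 2 ⊔ V 3) = V 2 ⊔ (V 3 ⊔ V 5) by
    rw [sup_left_comm, sup_comm (V 5) (V 3)]] at E1Z
  have M1Z := frk_inf_mono (X := V 5) (sup_le_sup hC'le hPle3)
  have SZ1 := frk_sup_mono2 hC'le hPle3
  set Z1 : Submodule K W := V 5 ⊓ (C' ⊔ P) with hZ1
  have LZ2 : finrank K Z1 + finrank K ↥(A' ⊔ Q) ≤
      finrank K ↥(Z1 ⊓ (A' ⊔ Q)) + finrank K ↥(V 0 ⊔ (V 4 ⊔ V 5)) :=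
    frk_inf_lower (sup_le
      (le_trans inf_le_left (le_trans le_sup_right le_sup_right))
      (sup_le (le_trans hA'le le_sup_left)
        (le_trans hQle4 (le_trans le_sup_left le_sup_right))))
  have SZ2 := frk_sup_mono2 hA'le hQle4
  set Z2 : Submodule K W := Z1 ⊓ (A' ⊔ Q) with hZ2
  have LZ3 : finrank K Z2 + finrank K ↥(B' ⊔ R) ≤
      finrank K ↥(Z2 ⊓ (B' ⊔ R)) + finrank K ↥(V 1 ⊔ (V 5 ⊔ V 6)) :=
    frk_inf_lower (sup_le
      (le_trans inf_le_left (le_trans inf_le_left (le_trans le_sup_left le_sup_right)))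
      (sup_le (le_trans hB'le le_sup_left)
        (le_trans hRle6 (le_trans le_sup_right le_sup_right))))
  have SZ3 := frk_sup_mono2 hB'le hRle6
  set Z3 : Submodule K W := Z2 ⊓ (B' ⊔ R) with hZ3
  have hZ3bot : Z3 = ⊥ := by
    apply fano_core h2 hAB hABC hPAB hPA hPB hQBC hQB hQC hRle
    rw [hZ3, hZ2, hZ1]
    exact le_inf (le_trans inf_le_left (le_trans inf_le_left inf_le_right))
      (le_inf (le_trans inf_le_left inf_le_right) inf_le_right)
  have hZ3z : finrank K Z3 = 0 := by rw [hZ3bot]; exact finrank_bot K W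
  have mA : finrank K A' ≤ finrank K (V 0) := Submodule.finrank_mono hA'le
  have mB : finrank K B' ≤ finrank K (V 1) := Submodule.finrank_mono hB'le
  have mC : finrank K C' ≤ finrank K (V 2) := Submodule.finrank_mono hC'le
  omega

private lemma fano_finrank_span_pair {v w : W}
    (h : ∀ s t : K, s • v + t • w = 0 → s = 0 ∧ t = 0) :
    finrank K ↥(Submodule.span K {v, w}) = 2 := by
  have hli : LinearIndependent K ![v, w] := LinearIndependent.pair_iff.mpr h
  have := finrank_span_eq_card (R := K) hli
  have hr : Set.range ![v, w] = {v, w} := by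
    ext x
    simp [Matrix.range_cons, Matrix.range_empty, or_comm]
  rw [hr] at this
  simpa using this

private lemma fano_span_triple_rank2 {x y z : W} (hz : z = x + y)
    (h : ∀ s t : K, s • x + t • y = 0 → s = 0 ∧ t = 0) :
    finrank K ↥(Submodule.span K {x, y, z}) = 2 := by
  have he : Submodule.span K {x, y, z} = Submodule.span K ({x, y} : Set W) := by
    apply le_antisymm
    · rw [Submodule.span_le]
      intro w hw
      simp only [Set.mem_insert_iff, Set.mem_singleton_iff] at hw
      rcases hw with rfl | rfl | rfl
      · exact Submodule.subset_span (by simp)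
      · exact Submodule.subset_span (by simp)
      · rw [hz]
        exact add_mem (Submodule.subset_span (by simp)) (Submodule.subset_span (by simp))
    · exact Submodule.span_mono
        (Set.insert_subset_insert (Set.singleton_subset_iff.mpr (Set.mem_insert y _)))
  rw [he]; exact fano_finrank_span_pair h

private lemma fano_finrank_span_triple3 (u : Fin 3 → W) (hu : LinearIndependent K u) :
    finrank K ↥(Submodule.span K {u 0, u 1, u 2}) = 3 := by
  have hr : Set.range u = {u 0, u 1, u 2} := by
    ext x
    constructor
    · rintro ⟨i, rfl⟩; fin_cases i <;> simp
    · rintro (rfl | rfl | rfl) <;> exact ⟨_, rfl⟩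
  have := finrank_span_eq_card (R := K) hu
  rw [hr] at this
  simpa using this

end FanoAux

open Filter in
/-- The linear functional (RHS minus LHS of `fano_odd_ineq`) on rank functions. -/
noncomputable def fanoL (f : Finset (Fin 7) → ℝ) : ℝ :=
  (f {0,4,5} + f {1,5,6} + f {2,3,5} + f {0,2,6} + f {3,4,6}
    + 2 * f {0,1,3} + 2 * f {1,2,4} + 6 * f {0} + 9 * f {1} + 6 * f {2}
    + 4 * f {3} + 4 * f {4} + 4 * f {1,2} + 5 * f {0,2} + 4 * f {0,1})
  - (f {5} + f {0,4} + f {1,6} + f {2,3} + f {0,2} + f {3,4}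
    + 2 * f {0,1} + 2 * f {0,3} + 2 * f {1,3} + 2 * f {1,2}
    + 2 * f {1,4} + 2 * f {2,4} + 13 * f {0,1,2})

private lemma fanoL_tendsto {g : ℕ → Finset (Fin 7) → ℝ} {c : ℕ → ℝ}
    {Φ : Finset (Fin 7) → ℝ}
    (hlim : ∀ A : Finset (Fin 7), Filter.Tendsto (fun i => c i * g i A)
      Filter.atTop (nhds (Φ A))) :
    Filter.Tendsto (fun i => fanoL (fun A => c i * g i A)) Filter.atTop
      (nhds (fanoL Φ)) := by
  simp only [fanoL]
  exact Filter.Tendsto.sub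
    (((((((((((((((hlim _).add (hlim _)).add (hlim _)).add (hlim _)).add (hlim _)).add ((hlim _).const_mul 2)).add ((hlim _).const_mul 2)).add ((hlim _).const_mul 6)).add ((hlim _).const_mul 9)).add ((hlim _).const_mul 6)).add ((hlim _).const_mul 4)).add ((hlim _).const_mul 4)).add ((hlim _).const_mul 4)).add ((hlim _).const_mul 5)).add ((hlim _).const_mul 4))
    (((((((((((((hlim _).add (hlim _)).add (hlim _)).add (hlim _)).add (hlim _)).add (hlim _)).add ((hlim _).const_mul 2)).add ((hlim _).const_mul 2)).add ((hlim _).const_mul 2)).add ((hlim _).const_mul 2)).add ((hlim _).const_mul 2)).add ((hlim _).const_mul 2)).add ((hlim _).const_mul 13))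


/-- the Fano matroid `F_7`, realized by the seven one-dimensional
subspaces spanned by `u_1, u_2, u_3, u_1+u_2, u_2+u_3, u_1+u_2+u_3, u_1+u_3` for
linearly independent `u_1, u_2, u_3` over a finite field of characteristic 2, is even
representable but not almost odd representable. -/

theorem fano_even_not_almost_odd {K W : Type} [Field K] [Fintype K] [CharP K 2]
    [AddCommGroup W] [Module K W] [FiniteDimensional K W]
    (u : Fin 3 → W) (hu : LinearIndependent K u)
    (S : Fin 7 → Submodule K W)
    (hS : S = ![Submodule.span K {u 0}, Submodule.span K {u 1}, Submodule.span K {u 2},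
        Submodule.span K {u 0 + u 1}, Submodule.span K {u 1 + u 2},
        Submodule.span K {u 0 + u 1 + u 2}, Submodule.span K {u 0 + u 2}])
    (Φ : Finset (Fin 7) → ℝ)
    (hΦ : ∀ A : Finset (Fin 7), Φ A = (Module.finrank K ↥(A.sup S) : ℝ)) :
    EvenRepresentable Φ ∧ ¬ AlmostOddRepresentable Φ := by
  constructor
  · -- Even representability: the given configuration is itself a representation.
    obtain ⟨n, -, hcard⟩ := FiniteField.card K 2
    exact ⟨{ F := K, W := W, V := S, rank_eq := hΦ }, (n : ℕ), n.pos,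
      by simpa [Nat.card_eq_fintype_card] using hcard⟩
  · rintro ⟨g, c, hodd, hc, hlim⟩
    have h2W : ∀ x : W, x + x = 0 := by
      intro x
      have h20 : (2 : K) • x = 0 := by
        rw [show (2 : K) = ((2 : ℕ) : K) by norm_num, CharP.cast_eq_zero K 2, zero_smul]
      simpa [two_smul] using h20
    have hcomb : ∀ a b c' : K, a • u 0 + b • u 1 + c' • u 2 = 0 →
        a = 0 ∧ b = 0 ∧ c' = 0 := by
      intro a b c' h
      have h' := Fintype.linearIndependent_iff.mp hu ![a, b, c']
        (by simpa [Fin.sum_univ_three] using h)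
      exact ⟨h' 0, h' 1, h' 2⟩
    have hS0 : S 0 = Submodule.span K {u 0} := by rw [hS]; rfl
    have hS1 : S 1 = Submodule.span K {u 1} := by rw [hS]; rfl
    have hS2 : S 2 = Submodule.span K {u 2} := by rw [hS]; rfl
    have hS3 : S 3 = Submodule.span K {u 0 + u 1} := by rw [hS]; rfl
    have hS4 : S 4 = Submodule.span K {u 1 + u 2} := by rw [hS]; rfl
    have hS5 : S 5 = Submodule.span K {u 0 + u 1 + u 2} := by rw [hS]; rfl
    have hS6 : S 6 = Submodule.span K {u 0 + u 2} := by rw [hS]; rfl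
    have nz0 : u 0 ≠ 0 := fun h =>
      one_ne_zero (hcomb 1 0 0 (by simp [h])).1
    have nz1 : u 1 ≠ 0 := fun h =>
      one_ne_zero (hcomb 0 1 0 (by simp [h])).2.1
    have nz2 : u 2 ≠ 0 := fun h =>
      one_ne_zero (hcomb 0 0 1 (by simp [h])).2.2
    have nz3 : u 0 + u 1 ≠ 0 := fun h =>
      one_ne_zero (hcomb 1 1 0 (by simpa using h)).1
    have nz4 : u 1 + u 2 ≠ 0 := fun h =>
      one_ne_zero (hcomb 0 1 1 (by simpa using h)).2.1
    have nz5 : u 0 + u 1 + u 2 ≠ 0 := fun h =>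
      one_ne_zero (hcomb 1 1 1 (by simpa using h)).1
    have nz6 : u 0 + u 2 ≠ 0 := fun h =>
      one_ne_zero (hcomb 1 0 1 (by simpa using h)).1
    have i01 : ∀ s t : K, s • (u 0) + t • (u 1) = 0 → s = 0 ∧ t = 0 := by
      intro s t hst
      obtain ⟨h1, h2, h3⟩ := hcomb s t 0 (by linear_combination (norm := module) hst)
      exact ⟨h1, h2⟩
    have i02 : ∀ s t : K, s • (u 0) + t • (u 2) = 0 → s = 0 ∧ t = 0 := by
      intro s t hst
      obtain ⟨h1, h2, h3⟩ := hcomb s 0 t (by linear_combination (norm := module) hst)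
      exact ⟨h1, h3⟩
    have i12 : ∀ s t : K, s • (u 1) + t • (u 2) = 0 → s = 0 ∧ t = 0 := by
      intro s t hst
      obtain ⟨h1, h2, h3⟩ := hcomb 0 s t (by linear_combination (norm := module) hst)
      exact ⟨h2, h3⟩
    have i03 : ∀ s t : K, s • (u 0) + t • (u 0 + u 1) = 0 → s = 0 ∧ t = 0 := by
      intro s t hst
      obtain ⟨h1, h2, h3⟩ := hcomb (s + t) t 0 (by linear_combination (norm := module) hst)
      exact ⟨by linear_combination h1 - h2, h2⟩
    have i13 : ∀ s t : K, s • (u 1) + t • (u 0 + u 1) = 0 → s = 0 ∧ t = 0 := by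
      intro s t hst
      obtain ⟨h1, h2, h3⟩ := hcomb t (s + t) 0 (by linear_combination (norm := module) hst)
      exact ⟨by linear_combination h2 - h1, h1⟩
    have i14 : ∀ s t : K, s • (u 1) + t • (u 1 + u 2) = 0 → s = 0 ∧ t = 0 := by
      intro s t hst
      obtain ⟨h1, h2, h3⟩ := hcomb 0 (s + t) t (by linear_combination (norm := module) hst)
      exact ⟨by linear_combination h2 - h3, h3⟩
    have i24 : ∀ s t : K, s • (u 2) + t • (u 1 + u 2) = 0 → s = 0 ∧ t = 0 := by
      intro s t hst
      obtain ⟨h1, h2, h3⟩ := hcomb 0 t (s + t) (by linear_combination (norm := module) hst)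
      exact ⟨by linear_combination h3 - h2, h2⟩
    have i34 : ∀ s t : K, s • (u 0 + u 1) + t • (u 1 + u 2) = 0 → s = 0 ∧ t = 0 := by
      intro s t hst
      obtain ⟨h1, h2, h3⟩ := hcomb s (s + t) t (by linear_combination (norm := module) hst)
      exact ⟨h1, h3⟩
    have i23 : ∀ s t : K, s • (u 2) + t • (u 0 + u 1) = 0 → s = 0 ∧ t = 0 := by
      intro s t hst
      obtain ⟨h1, h2, h3⟩ := hcomb t t s (by linear_combination (norm := module) hst)
      exact ⟨h3, h1⟩
    have i04 : ∀ s t : K, s • (u 0) + t • (u 1 + u 2) = 0 → s = 0 ∧ t = 0 := by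
      intro s t hst
      obtain ⟨h1, h2, h3⟩ := hcomb s t t (by linear_combination (norm := module) hst)
      exact ⟨h1, h2⟩
    have i16 : ∀ s t : K, s • (u 1) + t • (u 0 + u 2) = 0 → s = 0 ∧ t = 0 := by
      intro s t hst
      obtain ⟨h1, h2, h3⟩ := hcomb t s t (by linear_combination (norm := module) hst)
      exact ⟨h2, h1⟩
    have i15 : ∀ s t : K, s • (u 1) + t • (u 0 + u 1 + u 2) = 0 → s = 0 ∧ t = 0 := by
      intro s t hst
      obtain ⟨h1, h2, h3⟩ := hcomb t (s + t) t (by linear_combination (norm := module) hst)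
      exact ⟨by linear_combination h2 - h1, h1⟩
    have sup2 : ∀ a b : Fin 7, ({a, b} : Finset (Fin 7)).sup S = S a ⊔ S b := by
      intro a b; simp [Finset.sup_insert, Finset.sup_singleton]
    have sup3 : ∀ a b c' : Fin 7,
        ({a, b, c'} : Finset (Fin 7)).sup S = S a ⊔ (S b ⊔ S c') := by
      intro a b c'; simp [Finset.sup_insert, Finset.sup_singleton]
    have spair : ∀ x y : W,
        Submodule.span K {x} ⊔ Submodule.span K {y} = Submodule.span K {x, y} := by
      intro x y; rw [← Submodule.span_union, Set.singleton_union]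
    have striple : ∀ x y z : W,
        Submodule.span K {x} ⊔ (Submodule.span K {y} ⊔ Submodule.span K {z}) =
          Submodule.span K {x, y, z} := by
      intro x y z
      rw [← Submodule.span_union, ← Submodule.span_union, Set.singleton_union,
        Set.singleton_union]
    have P0 : Φ {0} = 1 := by
      rw [hΦ, Finset.sup_singleton, hS0, finrank_span_singleton nz0]; norm_num
    have P1 : Φ {1} = 1 := by
      rw [hΦ, Finset.sup_singleton, hS1, finrank_span_singleton nz1]; norm_num
    have P2 : Φ {2} = 1 := by
      rw [hΦ, Finset.sup_singleton, hS2, finrank_span_singleton nz2]; norm_num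
    have P3 : Φ {3} = 1 := by
      rw [hΦ, Finset.sup_singleton, hS3, finrank_span_singleton nz3]; norm_num
    have P4 : Φ {4} = 1 := by
      rw [hΦ, Finset.sup_singleton, hS4, finrank_span_singleton nz4]; norm_num
    have P5 : Φ {5} = 1 := by
      rw [hΦ, Finset.sup_singleton, hS5, finrank_span_singleton nz5]; norm_num
    have P01 : Φ {0,1} = 2 := by
      rw [hΦ, sup2, hS0, hS1, spair, fano_finrank_span_pair i01]; norm_num
    have P02 : Φ {0,2} = 2 := by
      rw [hΦ, sup2, hS0, hS2, spair, fano_finrank_span_pair i02]; norm_num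
    have P12 : Φ {1,2} = 2 := by
      rw [hΦ, sup2, hS1, hS2, spair, fano_finrank_span_pair i12]; norm_num
    have P03 : Φ {0,3} = 2 := by
      rw [hΦ, sup2, hS0, hS3, spair, fano_finrank_span_pair i03]; norm_num
    have P13 : Φ {1,3} = 2 := by
      rw [hΦ, sup2, hS1, hS3, spair, fano_finrank_span_pair i13]; norm_num
    have P14 : Φ {1,4} = 2 := by
      rw [hΦ, sup2, hS1, hS4, spair, fano_finrank_span_pair i14]; norm_num
    have P24 : Φ {2,4} = 2 := by
      rw [hΦ, sup2, hS2, hS4, spair, fano_finrank_span_pair i24]; norm_num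
    have P34 : Φ {3,4} = 2 := by
      rw [hΦ, sup2, hS3, hS4, spair, fano_finrank_span_pair i34]; norm_num
    have P23 : Φ {2,3} = 2 := by
      rw [hΦ, sup2, hS2, hS3, spair, fano_finrank_span_pair i23]; norm_num
    have P04 : Φ {0,4} = 2 := by
      rw [hΦ, sup2, hS0, hS4, spair, fano_finrank_span_pair i04]; norm_num
    have P16 : Φ {1,6} = 2 := by
      rw [hΦ, sup2, hS1, hS6, spair, fano_finrank_span_pair i16]; norm_num
    have P045 : Φ {0,4,5} = 2 := by
      rw [hΦ, sup3, hS0, hS4, hS5, striple, fano_span_triple_rank2 (by abel : u 0 + u 1 + u 2 = u 0 + (u 1 + u 2)) i04]; norm_num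
    have P156 : Φ {1,5,6} = 2 := by
      rw [hΦ, sup3, hS1, hS5, hS6, striple, fano_span_triple_rank2 (by linear_combination (norm := abel) - h2W (u 1) : u 0 + u 2 = u 1 + (u 0 + u 1 + u 2)) i15]; norm_num
    have P235 : Φ {2,3,5} = 2 := by
      rw [hΦ, sup3, hS2, hS3, hS5, striple, fano_span_triple_rank2 (by abel : u 0 + u 1 + u 2 = u 2 + (u 0 + u 1)) i23]; norm_num
    have P026 : Φ {0,2,6} = 2 := by
      rw [hΦ, sup3, hS0, hS2, hS6, striple, fano_span_triple_rank2 (rfl : u 0 + u 2 = u 0 + u 2) i02]; norm_num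
    have P346 : Φ {3,4,6} = 2 := by
      rw [hΦ, sup3, hS3, hS4, hS6, striple, fano_span_triple_rank2 (by linear_combination (norm := abel) - h2W (u 1) : u 0 + u 2 = (u 0 + u 1) + (u 1 + u 2)) i34]; norm_num
    have P013 : Φ {0,1,3} = 2 := by
      rw [hΦ, sup3, hS0, hS1, hS3, striple, fano_span_triple_rank2 (rfl : u 0 + u 1 = u 0 + u 1) i01]; norm_num
    have P124 : Φ {1,2,4} = 2 := by
      rw [hΦ, sup3, hS1, hS2, hS4, striple, fano_span_triple_rank2 (rfl : u 1 + u 2 = u 1 + (u 2)) i12]; norm_num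
    have P012 : Φ {0,1,2} = 3 := by
      rw [hΦ, sup3, hS0, hS1, hS2, striple, fano_finrank_span_triple3 u hu]; norm_num
    have key : ∀ i, 0 ≤ fanoL (fun A => c i * g i A) := by
      intro i
      obtain ⟨r, p, m, hp, hpodd, hm, hcard⟩ := hodd i
      letI := r.fieldF
      letI := r.fintypeF
      letI := r.addCommGroupW
      letI := r.moduleW
      letI := r.finiteDimensionalW
      have h2 : ∀ x : r.W, x + x = 0 → x = 0 := by
        obtain ⟨n, hqp, hqcard⟩ := FiniteField.card r.F (ringChar r.F)
        have hpq : p = ringChar r.F := by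
          have h1 : p ∣ (ringChar r.F) ^ (n : ℕ) := by
            rw [← hqcard, ← Nat.card_eq_fintype_card, hcard]
            exact dvd_pow_self p hm.ne'
          exact (Nat.prime_dvd_prime_iff_eq hp hqp).mp (hp.dvd_of_dvd_pow h1)
        have h2ne : (2 : r.F) ≠ 0 := by
          intro h20
          have hdvd : ringChar r.F ∣ 2 :=
            (CharP.cast_eq_zero_iff r.F (ringChar r.F) 2).mp (by exact_mod_cast h20)
          have hq2 : ringChar r.F = 2 :=
            (Nat.prime_dvd_prime_iff_eq hqp Nat.prime_two).mp hdvd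
          rw [hpq, hq2] at hpodd
          exact (by norm_num : ¬ Odd 2) hpodd
        intro x hx
        rcases smul_eq_zero.mp (show (2 : r.F) • x = 0 by rw [two_smul]; exact hx) with h | h
        · exact absurd h h2ne
        · exact h
      have hineq := fano_odd_ineq h2 r.V
      have hsup1 : ∀ a : Fin 7, ({a} : Finset (Fin 7)).sup r.V = r.V a := fun a =>
        Finset.sup_singleton
      have hsup2 : ∀ a b : Fin 7, ({a, b} : Finset (Fin 7)).sup r.V = r.V a ⊔ r.V b := by
        intro a b; simp [Finset.sup_insert, Finset.sup_singleton]
      have hsup3 : ∀ a b c' : Fin 7,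
          ({a, b, c'} : Finset (Fin 7)).sup r.V = r.V a ⊔ (r.V b ⊔ r.V c') := by
        intro a b c'; simp [Finset.sup_insert, Finset.sup_singleton]
      have hg : 0 ≤ fanoL (g i) := by
        have hcast := (Nat.cast_le (α := ℝ)).mpr hineq
        push_cast at hcast
        simp only [fanoL, r.rank_eq]
        rw [hsup3 0 4 5, hsup3 1 5 6, hsup3 2 3 5, hsup3 0 2 6, hsup3 3 4 6, hsup3 0 1 3,
          hsup3 1 2 4, hsup3 0 1 2, hsup1 0, hsup1 1, hsup1 2, hsup1 3, hsup1 4, hsup1 5,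
          hsup2 1 2, hsup2 0 2, hsup2 0 1, hsup2 0 4, hsup2 1 6, hsup2 2 3, hsup2 3 4,
          hsup2 0 3, hsup2 1 3, hsup2 1 4, hsup2 2 4]
        linarith
      have hL : fanoL (fun A => c i * g i A) = c i * fanoL (g i) := by
        simp only [fanoL]; ring
      rw [hL]
      exact mul_nonneg (hc i).le hg
    have hten := fanoL_tendsto hlim
    have h0 : (0 : ℝ) ≤ fanoL Φ := ge_of_tendsto' hten key
    have hval : fanoL Φ = -1 := by
      simp only [fanoL]
      rw [P045, P156, P235, P026, P346, P013, P124, P0, P1, P2, P3, P4, P12, P02, P01,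
        P5, P04, P16, P23, P34, P03, P13, P14, P24, P012]
      norm_num
    rw [hval] at h0
    linarith
end
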